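/- arXiv:1701.02709 — 7 statements merged into one kernel-verified Lean document; each statement's English description precedes it below -/
import Mathlib

section
/- Let L be a positive definite moment functional on real polynomials in d variables and let {P_α^n : |α| = n, n ∈ ℕ} be a family of polynomials of respective degrees n, spanning Π_n^d degree-wise, such that for each n every P_α^n is orthogonal to all polynomials of degree less than n; set ℙ_{−1} := 0. Then for every n ∈ ℕ and every 1 ≤ i ≤ d there exist unique real matrices A_{n,i} of size r_n^d × r_{n+1}^d, B_{n,i} of size r_n^d × r_n^d, and C_{n,i} of size r_n^d × r_{n−1}^d such that x_i ℙ_n(x) = A_{n,i} ℙ_{n+1}(x) + B_{n,i} ℙ_n(x) + C_{n,i} ℙ_{n−1}(x) as an identity of vectors of polynomials. Moreover, with H_n := L(ℙ_n ℙ_nᵀ) (the matrix with entries L(P_α^n P_β^n)), these matrices satisfy A_{n,i} H_{n+1} = L(x_i ℙ_n ℙ_{n+1}ᵀ), B_{n,i} H_n = L(x_i ℙ_n ℙ_nᵀ), and A_{n,i} H_{n+1} = H_n C_{n+1,i}ᵀ. -/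
open MvPolynomial Matrix MeasureTheory

noncomputable section

/-- Real polynomials in `d` variables. -/
abbrev MPoly (d : ℕ) : Type := MvPolynomial (Fin d) ℝ

/-- Multi-indices `α ∈ ℕ^d` of total degree `n`; there are `r_n^d = binom (n+d-1) n` of them. -/
abbrev Idx (d n : ℕ) : Type := {α : Fin d → ℕ // ∑ i, α i = n}

instance (d n : ℕ) : Fintype (Idx d n) :=
  Fintype.subtype (Finset.Nat.antidiagonalTuple d n)
    (fun _ => Finset.Nat.mem_antidiagonalTuple)

/-- The monomial `x^α`. -/
def mono {d : ℕ} (α : Fin d → ℕ) : MPoly d :=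
  MvPolynomial.monomial (Finsupp.equivFunOnFinite.symm α) 1

/-- Multi-indices `α ∈ ℕ^d` of total degree at most `n`. -/
abbrev IdxLe (d n : ℕ) : Type := {α : Fin d → ℕ // ∑ i, α i ≤ n}

instance (d n : ℕ) : Fintype (IdxLe d n) :=
  Fintype.subtype ((Finset.range (n+1)).biUnion fun k => Finset.Nat.antidiagonalTuple d k)
    (fun α => by
      simp only [Finset.mem_biUnion, Finset.mem_range, Finset.Nat.mem_antidiagonalTuple,
        Nat.lt_succ_iff]
      exact ⟨fun ⟨k, hk, he⟩ => he ▸ hk, fun h => ⟨_, h, rfl⟩⟩)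

/-- `P` is a polynomial of total degree strictly less than `n` (the zero polynomial belongs
to every such class). -/
def IsDegLt {d : ℕ} (P : MPoly d) (n : ℕ) : Prop := P = 0 ∨ P.totalDegree < n

/-- The family `{P m α : |α| = m ≤ n}` spans `Π_n^d`, the polynomials of total degree at
most `n`, for every `n`. -/
def SpansPi {d : ℕ} (P : ∀ n, Idx d n → MPoly d) : Prop :=
  ∀ n, Submodule.span ℝ {p | ∃ m, m ≤ n ∧ ∃ α : Idx d m, p = P m α} =
    MvPolynomial.restrictTotalDegree (Fin d) ℝ n

variable {d : ℕ}

/-- The matrix `H_n = L(ℙ_n ℙ_nᵀ)`. -/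
def Hmat (L : MPoly d →ₗ[ℝ] ℝ) (P : ∀ n, Idx d n → MPoly d) (n : ℕ) :
    Matrix (Idx d n) (Idx d n) ℝ :=
  Matrix.of fun α β => L (P n α * P n β)

/-!
The polynomials `P m α` with `m ≤ n` span `Π_n^d` and there are `dim Π_n^d` of them, so each
layer `ℙ_m` is linearly independent and every polynomial of degree `≤ k` is a combination of
`ℙ_k` plus a polynomial of degree `< k`. As `L(p²) > 0` for `p ≠ 0` and the two parts are
`L`-orthogonal, this decomposition is unique. Peeling `x_i ℙ_n` twice leaves a remainder of
degree `< n` that is orthogonal to every `q` of degree `< n - 1`, because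
`L(q x_i P_α^n) = L((x_i q) P_α^n) = 0`; hence the remainder lies in the span of `ℙ_{n-1}`.
Multiplying the relation by `ℙ_{n+1}ᵀ`, `ℙ_nᵀ` and applying `L` kills all blocks but one.
-/

theorem IsDegLt.eq_zero {p : MPoly d} (h : IsDegLt p 0) : p = 0 :=
  h.resolve_right (Nat.not_lt_zero _)

theorem IsDegLt.mono {p : MPoly d} {n m : ℕ} (h : IsDegLt p n) (hnm : n ≤ m) : IsDegLt p m :=
  h.imp_right fun h => h.trans_le hnm

theorem IsDegLt.X_mul {p : MPoly d} {n : ℕ} (h : IsDegLt p n) (i : Fin d) :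
    IsDegLt (X i * p) (n + 1) := by
  rcases h with rfl | h
  · exact Or.inl (mul_zero _)
  · exact Or.inr ((totalDegree_mul _ _).trans_lt (by rw [totalDegree_X]; omega))

theorem isDegLt_succ_iff {p : MPoly d} {k : ℕ} : IsDegLt p (k + 1) ↔ p.totalDegree ≤ k := by
  refine ⟨?_, fun h => Or.inr (Nat.lt_succ_of_le h)⟩
  rintro (rfl | h)
  · simp
  · exact Nat.le_of_lt_succ h

def totalDegreeLT (d n : ℕ) : Submodule ℝ (MPoly d) where
  carrier := {p | IsDegLt p n}
  zero_mem' := Or.inl rfl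
  add_mem' := by
    rintro p q (rfl | hp) (rfl | hq)
    · exact Or.inl (add_zero 0)
    · exact Or.inr (by rwa [zero_add])
    · exact Or.inr (by rwa [add_zero])
    · exact Or.inr ((totalDegree_add p q).trans_lt (max_lt hp hq))
  smul_mem' c p := by
    rintro (rfl | hp)
    · exact Or.inl (smul_zero c)
    · exact Or.inr ((totalDegree_smul_le c p).trans_lt hp)

theorem card_idxLe_eq_finrank (n : ℕ) :
    Fintype.card (IdxLe d n) = Module.finrank ℝ (restrictTotalDegree (Fin d) ℝ n) := by
  have e : {s : Fin d →₀ ℕ // s ∈ {t : Fin d →₀ ℕ | (t.sum fun _ e => e) ≤ n}} ≃ IdxLe d n :=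
    Finsupp.equivFunOnFinite.subtypeEquiv fun s => by simp [Finsupp.sum_fintype]
  exact (Module.finrank_eq_card_basis ((basisRestrictSupport ℝ _).reindex e)).symm

section OrthogonalSystem

variable {L : MPoly d →ₗ[ℝ] ℝ} {P : ∀ n, Idx d n → MPoly d}

theorem linearIndependent_of_spansPi (hspan : SpansPi P) (m : ℕ) :
    LinearIndependent ℝ (P m) := by
  let F : IdxLe d m → MPoly d := fun β => P (∑ i, β.1 i) ⟨β.1, rfl⟩
  have hrange : Set.range F = {p | ∃ k, k ≤ m ∧ ∃ α : Idx d k, p = P k α} := by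
    ext p
    constructor
    · rintro ⟨β, rfl⟩
      exact ⟨_, β.2, _, rfl⟩
    · rintro ⟨k, hk, ⟨a, rfl⟩, rfl⟩
      exact ⟨⟨a, hk⟩, rfl⟩
  have hF : LinearIndependent ℝ F := by
    rw [linearIndependent_iff_card_eq_finrank_span, Set.finrank, hrange, hspan m,
      card_idxLe_eq_finrank]
  let ι : Idx d m → IdxLe d m := fun α => ⟨α.1, α.2.le⟩
  have hPF : P m = F ∘ ι := by
    funext ⟨a, ha⟩
    subst ha
    rfl
  rw [hPF]
  exact hF.comp ι fun α β h => Subtype.ext (congrArg (fun γ : IdxLe d m => γ.1) h)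

theorem isDegLt_of_lt (hdeg : ∀ n (α : Idx d n), (P n α).totalDegree = n) {m k : ℕ}
    (hmk : m < k) (α : Idx d m) : IsDegLt (P m α) k :=
  Or.inr (by rw [hdeg]; exact hmk)

theorem sum_smul_mem_totalDegreeLT (hdeg : ∀ n (α : Idx d n), (P n α).totalDegree = n)
    {m k : ℕ} (hmk : m < k) (c : Idx d m → ℝ) : ∑ β, c β • P m β ∈ totalDegreeLT d k :=
  Submodule.sum_mem _ fun β _ => Submodule.smul_mem _ _ (isDegLt_of_lt hdeg hmk β)

theorem exists_eq_sum_smul_add (hdeg : ∀ n (α : Idx d n), (P n α).totalDegree = n)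
    (hspan : SpansPi P) {k : ℕ} {p : MPoly d} (hp : IsDegLt p (k + 1)) :
    ∃ (c : Idx d k → ℝ) (R : MPoly d), IsDegLt R k ∧ p = ∑ β, c β • P k β + R := by
  have hp' : p ∈ Submodule.span ℝ (Set.range (P k)) ⊔ totalDegreeLT d k := by
    have hmem := (mem_restrictTotalDegree _ _ _).mpr (isDegLt_succ_iff.mp hp)
    rw [← hspan k] at hmem
    refine Submodule.span_le.mpr ?_ hmem
    rintro _ ⟨m, hm, α, rfl⟩
    rcases hm.lt_or_eq with hlt | rfl
    · exact Submodule.mem_sup_right (isDegLt_of_lt hdeg hlt α)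
    · exact Submodule.mem_sup_left (Submodule.subset_span ⟨α, rfl⟩)
  obtain ⟨y, hy, R, hR, rfl⟩ := Submodule.mem_sup.mp hp'
  obtain ⟨c, rfl⟩ := (Submodule.mem_span_range_iff_exists_fun ℝ).mp hy
  exact ⟨c, R, hR, rfl⟩

theorem L_mul_sum_smul_eq_zero
    (horth : ∀ n (α : Idx d n) (R : MPoly d), IsDegLt R n → L (P n α * R) = 0)
    {m : ℕ} {q : MPoly d} (hq : IsDegLt q m) (c : Idx d m → ℝ) :
    L (q * ∑ β, c β • P m β) = 0 := by
  rw [Finset.mul_sum, map_sum]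
  exact Finset.sum_eq_zero fun β _ => by
    rw [mul_smul_comm, map_smul, mul_comm, horth m β q hq, smul_zero]

theorem eq_zero_of_L_mul_self (hL : ∀ p : MPoly d, p ≠ 0 → 0 < L (p * p)) {p : MPoly d}
    (h : L (p * p) = 0) : p = 0 :=
  by_contra fun hp => (hL p hp).ne' h

theorem eq_of_sum_smul_add_eq (hL : ∀ p : MPoly d, p ≠ 0 → 0 < L (p * p))
    (hspan : SpansPi P)
    (horth : ∀ n (α : Idx d n) (R : MPoly d), IsDegLt R n → L (P n α * R) = 0)
    {m : ℕ} {c c' : Idx d m → ℝ} {R R' : MPoly d} (hR : IsDegLt R m) (hR' : IsDegLt R' m)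
    (h : ∑ β, c β • P m β + R = ∑ β, c' β • P m β + R') : c = c' ∧ R = R' := by
  have hsub : IsDegLt (R' - R) m := (totalDegreeLT d m).sub_mem hR' hR
  have hu : ∑ β, c β • P m β - ∑ β, c' β • P m β = R' - R := by linear_combination h
  have hu0 : ∑ β, c β • P m β - ∑ β, c' β • P m β = 0 := eq_zero_of_L_mul_self hL <| by
    nth_rw 1 [hu]
    rw [mul_sub, map_sub, L_mul_sum_smul_eq_zero horth hsub, L_mul_sum_smul_eq_zero horth hsub,
      sub_zero]
  obtain rfl : c = c' := funext <| Fintype.linearIndependent_iffₛ.mp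
    (linearIndependent_of_spansPi hspan m) c c' (sub_eq_zero.mp hu0)
  exact ⟨rfl, add_left_cancel h⟩

theorem exists_eq_sum_smul_of_orthogonal (hL : ∀ p : MPoly d, p ≠ 0 → 0 < L (p * p))
    (hdeg : ∀ n (α : Idx d n), (P n α).totalDegree = n) (hspan : SpansPi P)
    (horth : ∀ n (α : Idx d n) (R : MPoly d), IsDegLt R n → L (P n α * R) = 0)
    {k : ℕ} {p : MPoly d} (hp : IsDegLt p (k + 1)) (hperp : ∀ q, IsDegLt q k → L (q * p) = 0) :
    ∃ c : Idx d k → ℝ, p = ∑ β, c β • P k β := by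
  obtain ⟨c, R, hR, rfl⟩ := exists_eq_sum_smul_add hdeg hspan hp
  have hR0 : R = 0 := eq_zero_of_L_mul_self hL <| by
    have h := hperp R hR
    rwa [mul_add, map_add, L_mul_sum_smul_eq_zero horth hR, zero_add] at h
  exact ⟨c, by rw [hR0, add_zero]⟩

theorem exists_X_mul_eq (hdeg : ∀ n (α : Idx d n), (P n α).totalDegree = n)
    (hspan : SpansPi P) (i : Fin d) (n : ℕ) (α : Idx d n) :
    ∃ (a : Idx d (n+1) → ℝ) (b : Idx d n → ℝ) (R : MPoly d),
      IsDegLt R n ∧ X i * P n α = ∑ β, a β • P (n+1) β + ∑ β, b β • P n β + R := by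
  have hX : IsDegLt (X i * P n α) (n + 2) := (isDegLt_of_lt hdeg n.lt_succ_self α).X_mul i
  obtain ⟨a, R₁, hR₁, h₁⟩ := exists_eq_sum_smul_add hdeg hspan hX
  obtain ⟨b, R, hR, rfl⟩ := exists_eq_sum_smul_add hdeg hspan hR₁
  exact ⟨a, b, R, hR, by rw [h₁, add_assoc]⟩

def ThreeTermRelation (P : ∀ n, Idx d n → MPoly d) (i : Fin d)
    (A : ∀ n : ℕ, Matrix (Idx d n) (Idx d (n+1)) ℝ) (B : ∀ n : ℕ, Matrix (Idx d n) (Idx d n) ℝ)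
    (Cm : ∀ n : ℕ, Matrix (Idx d (n+1)) (Idx d n) ℝ) : Prop :=
  (∀ α : Idx d 0, X i * P 0 α =
    (∑ β : Idx d 1, A 0 α β • P 1 β) + ∑ β : Idx d 0, B 0 α β • P 0 β) ∧
  (∀ n : ℕ, ∀ α : Idx d (n+1), X i * P (n+1) α =
    (∑ β : Idx d (n+2), A (n+1) α β • P (n+2) β) +
    (∑ β : Idx d (n+1), B (n+1) α β • P (n+1) β) +
    ∑ β : Idx d n, Cm n α β • P n β)

/-- The entries of `C_{n,i} ℙ_{n-1}`, with `ℙ_{-1} := 0`. -/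
def prevTerm (P : ∀ n, Idx d n → MPoly d) (Cm : ∀ n : ℕ, Matrix (Idx d (n+1)) (Idx d n) ℝ) :
    ∀ n, Idx d n → MPoly d
  | 0, _ => 0
  | n + 1, α => ∑ β, Cm n α β • P n β

theorem prevTerm_isDegLt (hdeg : ∀ n (α : Idx d n), (P n α).totalDegree = n)
    (Cm : ∀ n : ℕ, Matrix (Idx d (n+1)) (Idx d n) ℝ) :
    ∀ n (α : Idx d n), IsDegLt (prevTerm P Cm n α) n
  | 0, _ => Or.inl rfl
  | _ + 1, α => sum_smul_mem_totalDegreeLT hdeg (Nat.lt_succ_self _) (Cm _ α)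

variable {i : Fin d} {A : ∀ n : ℕ, Matrix (Idx d n) (Idx d (n+1)) ℝ}
  {B : ∀ n : ℕ, Matrix (Idx d n) (Idx d n) ℝ} {Cm : ∀ n : ℕ, Matrix (Idx d (n+1)) (Idx d n) ℝ}

theorem ThreeTermRelation.X_mul_eq (h : ThreeTermRelation P i A B Cm) :
    ∀ n (α : Idx d n), X i * P n α =
      ∑ β, A n α β • P (n+1) β + ∑ β, B n α β • P n β + prevTerm P Cm n α
  | 0, α => by rw [h.1 α, prevTerm, add_zero]
  | n + 1, α => h.2 n α

theorem exists_threeTermRelation (hL : ∀ p : MPoly d, p ≠ 0 → 0 < L (p * p))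
    (hdeg : ∀ n (α : Idx d n), (P n α).totalDegree = n) (hspan : SpansPi P)
    (horth : ∀ n (α : Idx d n) (R : MPoly d), IsDegLt R n → L (P n α * R) = 0) (i : Fin d) :
    ∃ A B Cm, ThreeTermRelation P i A B Cm := by
  choose A B R hR hXP using exists_X_mul_eq hdeg hspan i
  have hperp : ∀ m α q, IsDegLt q m → L (q * R (m + 1) α) = 0 := by
    intro m α q hq
    have hRe : R (m + 1) α = X i * P (m + 1) α - ∑ β, A (m + 1) α β • P (m + 2) β
        - ∑ β, B (m + 1) α β • P (m + 1) β := by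
      rw [hXP]; ring
    rw [hRe, mul_sub, mul_sub, map_sub, map_sub,
      L_mul_sum_smul_eq_zero horth (hq.mono (by omega)),
      L_mul_sum_smul_eq_zero horth (hq.mono (by omega)),
      show q * (X i * P (m + 1) α) = P (m + 1) α * (X i * q) by ring,
      horth _ _ _ (hq.X_mul i), sub_zero, sub_zero]
  choose Cm hCm using fun m α =>
    exists_eq_sum_smul_of_orthogonal hL hdeg hspan horth (hR (m + 1) α) (hperp m α)
  refine ⟨A, B, Cm, fun α => ?_, fun m α => ?_⟩
  · rw [hXP 0 α, (hR 0 α).eq_zero, add_zero]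
  · rw [hXP (m + 1) α, hCm m α]

theorem ThreeTermRelation.unique (hL : ∀ p : MPoly d, p ≠ 0 → 0 < L (p * p))
    (hdeg : ∀ n (α : Idx d n), (P n α).totalDegree = n) (hspan : SpansPi P)
    (horth : ∀ n (α : Idx d n) (R : MPoly d), IsDegLt R n → L (P n α * R) = 0)
    {A' : ∀ n : ℕ, Matrix (Idx d n) (Idx d (n+1)) ℝ} {B' : ∀ n : ℕ, Matrix (Idx d n) (Idx d n) ℝ}
    {C' : ∀ n : ℕ, Matrix (Idx d (n+1)) (Idx d n) ℝ}
    (h : ThreeTermRelation P i A B Cm) (h' : ThreeTermRelation P i A' B' C') :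
    A = A' ∧ B = B' ∧ Cm = C' := by
  have hlow : ∀ (B₀ : ∀ n : ℕ, Matrix (Idx d n) (Idx d n) ℝ)
      (C₀ : ∀ n : ℕ, Matrix (Idx d (n+1)) (Idx d n) ℝ) n (α : Idx d n),
      IsDegLt (∑ β, B₀ n α β • P n β + prevTerm P C₀ n α) (n + 1) := fun B₀ C₀ n α =>
    (totalDegreeLT d (n + 1)).add_mem (sum_smul_mem_totalDegreeLT hdeg n.lt_succ_self _)
      ((prevTerm_isDegLt hdeg C₀ n α).mono n.le_succ)
  have key : ∀ n (α : Idx d n),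
      A n α = A' n α ∧ B n α = B' n α ∧ prevTerm P Cm n α = prevTerm P C' n α := by
    intro n α
    have e := (h.X_mul_eq n α).symm.trans (h'.X_mul_eq n α)
    rw [add_assoc, add_assoc] at e
    obtain ⟨hA, e⟩ := eq_of_sum_smul_add_eq hL hspan horth (hlow B Cm n α) (hlow B' C' n α) e
    obtain ⟨hB, hC⟩ := eq_of_sum_smul_add_eq hL hspan horth
      (prevTerm_isDegLt hdeg Cm n α) (prevTerm_isDegLt hdeg C' n α) e
    exact ⟨hA, hB, hC⟩
  refine ⟨funext fun n => funext fun α => (key n α).1,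
    funext fun n => funext fun α => (key n α).2.1, funext fun n => funext fun α => ?_⟩
  exact funext <| Fintype.linearIndependent_iffₛ.mp (linearIndependent_of_spansPi hspan n)
    (Cm n α) (C' n α) (key (n + 1) α).2.2

theorem L_sum_smul_mul_self {m : ℕ} (c : Idx d m → ℝ) (β : Idx d m) :
    L ((∑ γ, c γ • P m γ) * P m β) = ∑ γ, c γ * Hmat L P m γ β := by
  simp only [Finset.sum_mul, smul_mul_assoc, map_sum, map_smul, smul_eq_mul, Hmat, of_apply]

theorem L_sum_smul_mul_of_ne (hdeg : ∀ n (α : Idx d n), (P n α).totalDegree = n)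
    (horth : ∀ n (α : Idx d n) (R : MPoly d), IsDegLt R n → L (P n α * R) = 0)
    {k m : ℕ} (hkm : k ≠ m) (c : Idx d m → ℝ) (β : Idx d k) :
    L ((∑ γ, c γ • P m γ) * P k β) = 0 := by
  rw [mul_comm]
  rcases hkm.lt_or_gt with hlt | hgt
  · exact L_mul_sum_smul_eq_zero horth (isDegLt_of_lt hdeg hlt β) c
  · exact horth k β _ (sum_smul_mem_totalDegreeLT hdeg hgt c)

theorem L_prevTerm_mul (hdeg : ∀ n (α : Idx d n), (P n α).totalDegree = n)
    (horth : ∀ n (α : Idx d n) (R : MPoly d), IsDegLt R n → L (P n α * R) = 0)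
    {n k : ℕ} (hnk : n ≤ k) (α : Idx d n) (β : Idx d k) :
    L (prevTerm P Cm n α * P k β) = 0 := by
  rw [mul_comm]
  exact horth k β _ ((prevTerm_isDegLt hdeg Cm n α).mono hnk)

theorem ThreeTermRelation.mul_Hmat_succ (hdeg : ∀ n (α : Idx d n), (P n α).totalDegree = n)
    (horth : ∀ n (α : Idx d n) (R : MPoly d), IsDegLt R n → L (P n α * R) = 0)
    (h : ThreeTermRelation P i A B Cm) (n : ℕ) :
    A n * Hmat L P (n+1) = of fun α β => L (X i * P n α * P (n+1) β) := by
  ext α β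
  rw [mul_apply, of_apply, h.X_mul_eq, add_mul, add_mul, map_add, map_add, L_sum_smul_mul_self,
    L_sum_smul_mul_of_ne hdeg horth (by omega), L_prevTerm_mul hdeg horth (by omega),
    add_zero, add_zero]

theorem ThreeTermRelation.mul_Hmat (hdeg : ∀ n (α : Idx d n), (P n α).totalDegree = n)
    (horth : ∀ n (α : Idx d n) (R : MPoly d), IsDegLt R n → L (P n α * R) = 0)
    (h : ThreeTermRelation P i A B Cm) (n : ℕ) :
    B n * Hmat L P n = of fun α β => L (X i * P n α * P n β) := by
  ext α β
  rw [mul_apply, of_apply, h.X_mul_eq, add_mul, add_mul, map_add, map_add, L_sum_smul_mul_self,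
    L_sum_smul_mul_of_ne hdeg horth (by omega), L_prevTerm_mul hdeg horth le_rfl,
    zero_add, add_zero]

theorem ThreeTermRelation.mul_Hmat_succ_eq_Hmat_mul_transpose
    (hdeg : ∀ n (α : Idx d n), (P n α).totalDegree = n)
    (horth : ∀ n (α : Idx d n) (R : MPoly d), IsDegLt R n → L (P n α * R) = 0)
    (h : ThreeTermRelation P i A B Cm) (n : ℕ) :
    A n * Hmat L P (n+1) = Hmat L P n * (Cm n)ᵀ := by
  rw [h.mul_Hmat_succ hdeg horth]
  ext α β
  rw [of_apply, mul_apply, show X i * P n α * P (n+1) β = X i * P (n+1) β * P n α by ring,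
    h.X_mul_eq, add_mul, add_mul, map_add, map_add, L_sum_smul_mul_of_ne hdeg horth (by omega),
    L_sum_smul_mul_of_ne hdeg horth (by omega), zero_add, zero_add, prevTerm,
    L_sum_smul_mul_self]
  refine Finset.sum_congr rfl fun γ _ => ?_
  rw [transpose_apply, mul_comm, Hmat, of_apply, of_apply, mul_comm (P n γ)]

end OrthogonalSystem

/-- `Cm n` is the matrix `C_{n+1,i}`. -/
theorem three_term_relation_exists_unique
    (L : MPoly d →ₗ[ℝ] ℝ)
    (hL : ∀ p : MPoly d, p ≠ 0 → 0 < L (p * p))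
    (P : ∀ n, Idx d n → MPoly d)
    (hdeg : ∀ n (α : Idx d n), (P n α).totalDegree = n)
    (hspan : SpansPi P)
    (horth : ∀ n (α : Idx d n) (R : MPoly d), IsDegLt R n → L (P n α * R) = 0)
    (i : Fin d) :
    (∃! ABC : (∀ n : ℕ, Matrix (Idx d n) (Idx d (n+1)) ℝ) ×
              (∀ n : ℕ, Matrix (Idx d n) (Idx d n) ℝ) ×
              (∀ n : ℕ, Matrix (Idx d (n+1)) (Idx d n) ℝ),
      (∀ α : Idx d 0, X i * P 0 α =
        (∑ β : Idx d 1, ABC.1 0 α β • P 1 β) + ∑ β : Idx d 0, ABC.2.1 0 α β • P 0 β) ∧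
      (∀ n : ℕ, ∀ α : Idx d (n+1), X i * P (n+1) α =
        (∑ β : Idx d (n+2), ABC.1 (n+1) α β • P (n+2) β) +
        (∑ β : Idx d (n+1), ABC.2.1 (n+1) α β • P (n+1) β) +
        ∑ β : Idx d n, ABC.2.2 n α β • P n β)) ∧
    (∀ (A : ∀ n : ℕ, Matrix (Idx d n) (Idx d (n+1)) ℝ)
       (B : ∀ n : ℕ, Matrix (Idx d n) (Idx d n) ℝ)
       (Cm : ∀ n : ℕ, Matrix (Idx d (n+1)) (Idx d n) ℝ),
      ((∀ α : Idx d 0, X i * P 0 α =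
          (∑ β : Idx d 1, A 0 α β • P 1 β) + ∑ β : Idx d 0, B 0 α β • P 0 β) ∧
       (∀ n : ℕ, ∀ α : Idx d (n+1), X i * P (n+1) α =
          (∑ β : Idx d (n+2), A (n+1) α β • P (n+2) β) +
          (∑ β : Idx d (n+1), B (n+1) α β • P (n+1) β) +
          ∑ β : Idx d n, Cm n α β • P n β)) →
      ∀ n : ℕ,
        A n * Hmat L P (n+1) =
          Matrix.of (fun (α : Idx d n) (β : Idx d (n+1)) => L (X i * P n α * P (n+1) β)) ∧
        B n * Hmat L P n =
          Matrix.of (fun (α β : Idx d n) => L (X i * P n α * P n β)) ∧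
        A n * Hmat L P (n+1) = Hmat L P n * (Cm n)ᵀ) := by
  obtain ⟨A, B, Cm, hrel⟩ := exists_threeTermRelation hL hdeg hspan horth i
  refine ⟨⟨(A, B, Cm), hrel, fun ABC hABC => ?_⟩,
    fun A B Cm (h : ThreeTermRelation P i A B Cm) n =>
      ⟨h.mul_Hmat_succ hdeg horth n, h.mul_Hmat hdeg horth n,
        h.mul_Hmat_succ_eq_Hmat_mul_transpose hdeg horth n⟩⟩
  obtain ⟨hA, hB, hC⟩ := ThreeTermRelation.unique hL hdeg hspan horth hABC hrel
  exact Prod.ext hA (Prod.ext hB hC)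
end
end

section
/- Let L be a positive definite moment functional on real polynomials in d variables and let {ℙ_n} be an orthonormal family: each P_α^n has degree n, the family spans Π_n^d degree-wise, and L(P_α^n P_β^m) = δ_{n,m} δ_{α,β}. Then for every n ∈ ℕ and 1 ≤ i ≤ d, x_i ℙ_n(x) = A_{n,i} ℙ_{n+1}(x) + B_{n,i} ℙ_n(x) + A_{n−1,i}ᵀ ℙ_{n−1}(x), where A_{n,i} = L(x_i ℙ_n ℙ_{n+1}ᵀ), B_{n,i} = L(x_i ℙ_n ℙ_nᵀ), ℙ_{−1} := 0 and A_{−1,i} := 0; moreover each B_{n,i} is a symmetric matrix. -/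
open MvPolynomial Matrix MeasureTheory

noncomputable section

variable {d : ℕ}

/-- The matrix `A_{n,i} = L(x_i ℙ_n ℙ_{n+1}ᵀ)`. -/
def Amat (L : MPoly d →ₗ[ℝ] ℝ) (P : ∀ n, Idx d n → MPoly d) (n : ℕ) (i : Fin d) :
    Matrix (Idx d n) (Idx d (n+1)) ℝ :=
  Matrix.of fun α β => L (X i * P n α * P (n+1) β)

/-- The matrix `B_{n,i} = L(x_i ℙ_n ℙ_nᵀ)`. -/
def Bmat (L : MPoly d →ₗ[ℝ] ℝ) (P : ∀ n, Idx d n → MPoly d) (n : ℕ) (i : Fin d) :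
    Matrix (Idx d n) (Idx d n) ℝ :=
  Matrix.of fun α β => L (X i * P n α * P n β)

/-! The `P m α` with `m ≤ N` form an `L`-orthonormal spanning set of `Π_N^d`, so every `q` of
degree `≤ N` is `∑ L(q P_β^m) P_β^m`. For `q = x_i P_α^n` (degree `≤ n + 1`) the coefficient
`L(x_i P_α^n P_β^m) = L(P_α^n · x_i P_β^m)` vanishes when `m + 1 < n`, since `P_α^n` is orthogonal
to `Π_{n-1}^d`; the three surviving blocks are `A_{n,i}`, `B_{n,i}` and `A_{n-1,i}ᵀ`. -/

theorem Submodule.eq_sum_smul_of_mem_span_image {R A ι : Type*} [CommSemiring R] [Semiring A]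
    [Algebra R A] [DecidableEq ι] (L : A →ₗ[R] R) (f : ι → A)
    (hf : ∀ s t, L (f s * f t) = if s = t then 1 else 0) {S : Finset ι} {q : A}
    (hq : q ∈ Submodule.span R (f '' S)) :
    q = ∑ t ∈ S, L (q * f t) • f t := by
  let proj : A →ₗ[R] A := ∑ t ∈ S, (L ∘ₗ LinearMap.mulRight R (f t)).smulRight (f t)
  have hproj : ∀ p, proj p = ∑ t ∈ S, L (p * f t) • f t := fun p => by simp [proj]
  refine (hproj q ▸ LinearMap.eqOn_span' (f := LinearMap.id) (g := proj) ?_ hq :)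
  rintro _ ⟨s, hs, rfl⟩
  simp [hproj, hf, Finset.mem_coe.mp hs]

theorem MvPolynomial.totalDegree_X_mul_le {σ R : Type*} [CommSemiring R] [Nontrivial R] (s : σ)
    (p : MvPolynomial σ R) : (X s * p).totalDegree ≤ p.totalDegree + 1 :=
  (totalDegree_mul _ _).trans (by rw [totalDegree_X, add_comm])

namespace SpansPi

variable {L : MPoly d →ₗ[ℝ] ℝ} {P : ∀ n, Idx d n → MPoly d}

theorem totalDegree_le (hspan : SpansPi P) {m : ℕ} (α : Idx d m) :
    (P m α).totalDegree ≤ m :=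
  (mem_restrictTotalDegree _ _ _).mp (hspan m ▸ Submodule.subset_span ⟨m, le_rfl, α, rfl⟩)

theorem map_mul_eq_zero_of_totalDegree_lt (hspan : SpansPi P)
    (hoff : ∀ n m : ℕ, n ≠ m → ∀ (α : Idx d n) (β : Idx d m), L (P n α * P m β) = 0)
    {n : ℕ} (α : Idx d n) {q : MPoly d} (hq : q.totalDegree < n) : L (P n α * q) = 0 := by
  have hmem : q ∈ Submodule.span ℝ {p | ∃ m, m ≤ q.totalDegree ∧ ∃ β : Idx d m, p = P m β} := by
    rw [hspan, mem_restrictTotalDegree]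
  refine (Submodule.span_le (p := LinearMap.ker (L ∘ₗ LinearMap.mulLeft ℝ (P n α)))).mpr ?_ hmem
  rintro _ ⟨m, hm, β, rfl⟩
  exact hoff n m (by omega) α β

theorem eq_sum_range_of_totalDegree_le (hspan : SpansPi P)
    (hon : ∀ n (α β : Idx d n), L (P n α * P n β) = if α = β then 1 else 0)
    (hoff : ∀ n m : ℕ, n ≠ m → ∀ (α : Idx d n) (β : Idx d m), L (P n α * P m β) = 0)
    {N : ℕ} {q : MPoly d} (hq : q.totalDegree ≤ N) :
    q = ∑ m ∈ Finset.range (N + 1), ∑ β : Idx d m, L (q * P m β) • P m β := by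
  have horth : ∀ s t : Σ m, Idx d m, L (P s.1 s.2 * P t.1 t.2) = if s = t then 1 else 0 := by
    rintro ⟨m, α⟩ ⟨m', β⟩
    rcases eq_or_ne m m' with rfl | hne
    · simp [hon]
    · simp [hoff m m' hne, hne]
  have hmem : q ∈ Submodule.span ℝ ((fun t : Σ m, Idx d m => P t.1 t.2) ''
      ↑((Finset.range (N + 1)).sigma fun m => (Finset.univ : Finset (Idx d m)))) := by
    convert (hspan N).ge ((mem_restrictTotalDegree _ _ _).mpr hq) using 2
    ext p
    simp [eq_comm]
  exact (Submodule.eq_sum_smul_of_mem_span_image L _ horth hmem).trans (Finset.sum_sigma _ _ _)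

theorem X_mul_eq_sum_range (hspan : SpansPi P)
    (hon : ∀ n (α β : Idx d n), L (P n α * P n β) = if α = β then 1 else 0)
    (hoff : ∀ n m : ℕ, n ≠ m → ∀ (α : Idx d n) (β : Idx d m), L (P n α * P m β) = 0)
    {n : ℕ} (i : Fin d) (α : Idx d n) :
    X i * P n α = ∑ m ∈ Finset.range (n + 2), ∑ β : Idx d m, L (X i * P n α * P m β) • P m β :=
  hspan.eq_sum_range_of_totalDegree_le hon hoff
    ((totalDegree_X_mul_le i _).trans (Nat.succ_le_succ (hspan.totalDegree_le α)))

theorem map_X_mul_mul_eq_zero (hspan : SpansPi P)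
    (hoff : ∀ n m : ℕ, n ≠ m → ∀ (α : Idx d n) (β : Idx d m), L (P n α * P m β) = 0)
    {n m : ℕ} (hmn : m + 1 < n) (i : Fin d) (α : Idx d n) (β : Idx d m) :
    L (X i * P n α * P m β) = 0 := by
  rw [show X i * P n α * P m β = P n α * (X i * P m β) by ring]
  exact hspan.map_mul_eq_zero_of_totalDegree_lt hoff α
    ((totalDegree_X_mul_le i _).trans_lt (by have := hspan.totalDegree_le β; omega))

end SpansPi

theorem Amat_transpose_apply (L : MPoly d →ₗ[ℝ] ℝ) (P : ∀ n, Idx d n → MPoly d) (n : ℕ)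
    (i : Fin d) (α : Idx d (n + 1)) (β : Idx d n) :
    (Amat L P n i)ᵀ α β = L (X i * P (n + 1) α * P n β) := by
  simp only [Amat, transpose_apply, of_apply, mul_right_comm]

theorem Bmat_isSymm (L : MPoly d →ₗ[ℝ] ℝ) (P : ∀ n, Idx d n → MPoly d) (n : ℕ) (i : Fin d) :
    (Bmat L P n i).IsSymm := by
  ext α β
  simp only [Bmat, transpose_apply, of_apply, mul_right_comm]

theorem orthonormal_three_term_relation_general
    (L : MPoly d →ₗ[ℝ] ℝ)
    (P : ∀ n, Idx d n → MPoly d)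
    (hspan : SpansPi P)
    (hon : ∀ n (α β : Idx d n), L (P n α * P n β) = if α = β then 1 else 0)
    (hoff : ∀ n m : ℕ, n ≠ m → ∀ (α : Idx d n) (β : Idx d m), L (P n α * P m β) = 0) :
    (∀ (i : Fin d) (α : Idx d 0), X i * P 0 α =
      (∑ β : Idx d 1, Amat L P 0 i α β • P 1 β) +
      ∑ β : Idx d 0, Bmat L P 0 i α β • P 0 β) ∧
    (∀ (n : ℕ) (i : Fin d) (α : Idx d (n+1)), X i * P (n+1) α =
      (∑ β : Idx d (n+2), Amat L P (n+1) i α β • P (n+2) β) +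
      (∑ β : Idx d (n+1), Bmat L P (n+1) i α β • P (n+1) β) +
      ∑ β : Idx d n, (Amat L P n i)ᵀ α β • P n β) ∧
    (∀ (n : ℕ) (i : Fin d), (Bmat L P n i).IsSymm) := by
  refine ⟨fun i α => ?_, fun n i α => ?_, Bmat_isSymm L P⟩
  · rw [hspan.X_mul_eq_sum_range hon hoff, Finset.sum_range_succ, Finset.sum_range_one, add_comm]
    rfl
  · have hlow : ∑ m ∈ Finset.range n, ∑ β : Idx d m, L (X i * P (n + 1) α * P m β) • P m β = 0 :=
      Finset.sum_eq_zero fun m hm => Finset.sum_eq_zero fun β _ => by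
        rw [hspan.map_X_mul_mul_eq_zero hoff (by simpa using hm), zero_smul]
    rw [hspan.X_mul_eq_sum_range hon hoff, Finset.sum_range_succ, Finset.sum_range_succ,
      Finset.sum_range_succ, hlow, zero_add]
    simp only [Amat_transpose_apply]
    simp only [Amat, Bmat, of_apply]
    abel

/-- For an orthonormal family the three-term relation takes the form
`x_i ℙ_n = A_{n,i} ℙ_{n+1} + B_{n,i} ℙ_n + A_{n-1,i}ᵀ ℙ_{n-1}` (`ℙ_{-1} := 0`, `A_{-1,i} := 0`)
with `A_{n,i} = L(x_i ℙ_n ℙ_{n+1}ᵀ)`, `B_{n,i} = L(x_i ℙ_n ℙ_nᵀ)`, `B_{n,i}` symmetric. -/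
theorem orthonormal_three_term_relation
    (L : MPoly d →ₗ[ℝ] ℝ)
    (hL : ∀ p : MPoly d, p ≠ 0 → 0 < L (p * p))
    (P : ∀ n, Idx d n → MPoly d)
    (hdeg : ∀ n (α : Idx d n), (P n α).totalDegree = n)
    (hspan : SpansPi P)
    (hon : ∀ n (α β : Idx d n), L (P n α * P n β) = if α = β then 1 else 0)
    (hoff : ∀ n m : ℕ, n ≠ m → ∀ (α : Idx d n) (β : Idx d m), L (P n α * P m β) = 0) :
    (∀ (i : Fin d) (α : Idx d 0), X i * P 0 α =
      (∑ β : Idx d 1, Amat L P 0 i α β • P 1 β) +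
      ∑ β : Idx d 0, Bmat L P 0 i α β • P 0 β) ∧
    (∀ (n : ℕ) (i : Fin d) (α : Idx d (n+1)), X i * P (n+1) α =
      (∑ β : Idx d (n+2), Amat L P (n+1) i α β • P (n+2) β) +
      (∑ β : Idx d (n+1), Bmat L P (n+1) i α β • P (n+1) β) +
      ∑ β : Idx d n, (Amat L P n i)ᵀ α β • P n β) ∧
    (∀ (n : ℕ) (i : Fin d), (Bmat L P n i).IsSymm) :=
  orthonormal_three_term_relation_general L P hspan hon hoff
end
end

section
/- Let {ℙ_n}_{n=0}^∞ = {P_α^n : |α| = n, n ∈ ℕ}, with ℙ_0 = 1, be an arbitrary sequence of real polynomials in d variables such that {P_α^m : |α| ≤ m ≤ n} spans Π_n^d for each n, and set ℙ_{−1} := 0. Then the following are equivalent: (1) there exists a positive definite linear functional L : Π^d → ℝ such that L(P_α^n P_β^m) = δ_{n,m} δ_{α,β} for all indices; (2) for every n ≥ 0 and 1 ≤ i ≤ d there exist matrices A_{n,i} of size r_n^d × r_{n+1}^d and symmetric matrices B_{n,i} of size r_n^d × r_n^d such that (i) x_i ℙ_n(x) = A_{n,i} ℙ_{n+1}(x)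 + B_{n,i} ℙ_n(x) + A_{n−1,i}ᵀ ℙ_{n−1}(x) for 1 ≤ i ≤ d (with A_{−1,i} := 0), and (ii) rank A_{n,i} = r_n^d for each i, and the stacked matrix A_n = (A_{n,1}ᵀ, …, A_{n,d}ᵀ)ᵀ has rank r_{n+1}^d. -/
open MvPolynomial Matrix MeasureTheory

noncomputable section

variable {d : ℕ}

/-!
The spanning hypothesis makes `γ ↦ P |γ| γ` a basis of `Π^d` adapted to the filtration by
`Π_N^d` (a spanning family of `Π_N^d` with `dim Π_N^d` members is independent).

If `L` makes `{P n α}` orthonormal, the coordinates of `p` in this basis are the numbers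
`L (p * P n α)`, so expanding `x_i P_{n+1} α` gives the three-term relation with
`A_{n,i} = L(x_i ℙ_n ℙ_{n+1}ᵀ)` and `B_{n,i} = L(x_i ℙ_n ℙ_nᵀ)`. The rank conditions hold because
`x_i p ∈ Π_n` forces `deg p < n`, and because `Π_{n+1} = Π_n + ∑ᵢ x_i Π_n`.

Conversely, let `L` be the coordinate along `P 0 = 1`. Using `Π_{k+1} = Π_k + ∑ᵢ x_i Π_k` and the
relation for `x_i ℙ_n`, induction on `k` shows `L (f * P n α) = 0` for `deg f ≤ k < n`.
Evaluating `L(x_i ℙ_n ℙ_{n+1}ᵀ)` in two ways then gives `A_n (G_{n+1} - I) = 0` for the Gram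
matrix `G_{n+1} = L(ℙ_{n+1} ℙ_{n+1}ᵀ)`, and the rank of the stacked `A_n` forces `G_{n+1} = I`.
Positivity of `L` follows from orthonormality of a basis.
-/

theorem Matrix.rank_eq_card_width_iff {m n K : Type*} [Field K] [Fintype n] [DecidableEq n]
    {A : Matrix m n K} : A.rank = Fintype.card n ↔ ∀ v, A *ᵥ v = 0 → v = 0 := by
  rw [rank_eq_finrank_span_cols, eq_comm, ← Set.finrank,
    ← linearIndependent_iff_card_eq_finrank_span, ← mulVec_injective_iff]
  exact injective_iff_map_eq_zero A.mulVecLin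

theorem MvPolynomial.restrictTotalDegree_succ_le (σ R : Type*) [CommSemiring R] (n : ℕ) :
    restrictTotalDegree σ R (n + 1) ≤ restrictTotalDegree σ R n ⊔
      ⨆ i, (restrictTotalDegree σ R n).map (LinearMap.mulLeft R (X i)) := by
  refine (restrictSupport_eq_span R _).trans_le (Submodule.span_le.2 ?_)
  rintro _ ⟨κ, hκ, rfl⟩
  have hκ : (κ.sum fun _ => id) ≤ n + 1 := hκ
  by_cases hle : (κ.sum fun _ => id) ≤ n
  · exact Submodule.mem_sup_left
      ((mem_restrictTotalDegree _ _ _).2 ((totalDegree_monomial_le _ _).trans hle))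
  obtain ⟨i, hi⟩ : ∃ i, κ i ≠ 0 := by
    by_contra! h
    exact hle (by simp [show κ = 0 from Finsupp.ext h])
  have hsplit : Finsupp.single i 1 + (κ - Finsupp.single i 1) = κ :=
    add_tsub_cancel_of_le (Finsupp.single_le_iff.2 (Nat.one_le_iff_ne_zero.2 hi))
  have hdeg : (κ.sum fun _ => id) = ((κ - Finsupp.single i 1).sum fun _ => id) + 1 := by
    conv_lhs => rw [← hsplit]
    rw [Finsupp.sum_add_index' (fun _ => rfl) (fun _ _ _ => rfl), Finsupp.sum_single_index rfl,
      add_comm, id]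
  refine Submodule.mem_sup_right (Submodule.mem_iSup_of_mem i
    ⟨monomial (κ - Finsupp.single i 1) 1, ?_, ?_⟩)
  · exact (mem_restrictTotalDegree _ _ _).2 ((totalDegree_monomial_le _ _).trans (by omega))
  · rw [LinearMap.mulLeft_apply, X, monomial_mul, one_mul, hsplit]

theorem MvPolynomial.X_mul_mem_restrictTotalDegree {σ R : Type*} [CommSemiring R] [Nontrivial R]
    {f : MvPolynomial σ R} {n : ℕ} (i : σ) (hf : f ∈ restrictTotalDegree σ R n) :
    X i * f ∈ restrictTotalDegree σ R (n + 1) := by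
  rw [mem_restrictTotalDegree] at hf ⊢
  exact (totalDegree_mul _ _).trans (by rw [totalDegree_X]; omega)

theorem MvPolynomial.restrictTotalDegree_mono (σ R : Type*) [CommSemiring R] {m n : ℕ}
    (h : m ≤ n) : restrictTotalDegree σ R m ≤ restrictTotalDegree σ R n :=
  restrictSupport_mono R fun _ hs => le_trans hs h

def Matrix.stack {ι m n R : Type*} (A : ι → Matrix m n R) : Matrix (ι × m) n R :=
  of fun p j => A p.1 p.2 j

namespace Module.Basis

variable {ι K A : Type*} [DecidableEq ι] [CommRing K] [Ring A] [Algebra K A] (b : Basis ι K A)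
  {L : A →ₗ[K] K}

theorem repr_apply_eq_of_orthonormal (hL : ∀ i j : ι, L (b i * b j) = if i = j then 1 else 0)
    (p : A) (i : ι) : b.repr p i = L (p * b i) := by
  have h : Finsupp.lapply i ∘ₗ (b.repr : A →ₗ[K] ι →₀ K) = L ∘ₗ LinearMap.mulRight K (b i) :=
    b.ext fun j => by simp [hL, Finsupp.single_apply]
  exact LinearMap.congr_fun h p

theorem map_mul_self_pos_of_orthonormal [LinearOrder K] [IsStrictOrderedRing K]
    (hL : ∀ i j : ι, L (b i * b j) = if i = j then 1 else 0) {p : A} (hp : p ≠ 0) :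
    0 < L (p * p) := by
  have hsum : L (p * p) = ∑ i ∈ (b.repr p).support, b.repr p i * b.repr p i := by
    nth_rw 2 [← b.linearCombination_repr p]
    rw [Finsupp.linearCombination_apply, Finsupp.mul_sum, map_finsuppSum]
    simp only [mul_smul_comm, map_smul, smul_eq_mul, ← b.repr_apply_eq_of_orthonormal hL]
    rfl
  obtain ⟨i, hi⟩ : (b.repr p).support.Nonempty := by simpa using hp
  exact hsum ▸ Finset.sum_pos' (fun _ _ => mul_self_nonneg _)
    ⟨i, hi, mul_self_pos.2 (Finsupp.mem_support_iff.1 hi)⟩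

end Module.Basis

namespace Favard

variable {P : ∀ n, Idx d n → MPoly d}

theorem isDegLt_of_X_mul_mem {p : MPoly d} {n : ℕ} (i : Fin d)
    (h : X i * p ∈ restrictTotalDegree (Fin d) ℝ n) : IsDegLt p n := by
  refine or_iff_not_imp_left.2 fun hp => ?_
  rw [mem_restrictTotalDegree, totalDegree_mul_of_isDomain (X_ne_zero i) hp, totalDegree_X] at h
  omega

def ofMultiIndex (P : ∀ n, Idx d n → MPoly d) (γ : Fin d → ℕ) : MPoly d :=
  P (∑ i, γ i) ⟨γ, rfl⟩

theorem ofMultiIndex_of_sum_eq {γ : Fin d → ℕ} {n : ℕ} (h : ∑ i, γ i = n) :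
    ofMultiIndex P γ = P n ⟨γ, h⟩ := by
  subst h; rfl

theorem span_image_ofMultiIndex (hspan : SpansPi P) (N : ℕ) :
    Submodule.span ℝ (ofMultiIndex P '' {γ | ∑ i, γ i ≤ N}) =
      restrictTotalDegree (Fin d) ℝ N := by
  convert hspan N using 2
  ext p
  constructor
  · rintro ⟨γ, hγ, rfl⟩
    exact ⟨_, hγ, ⟨γ, rfl⟩, rfl⟩
  · rintro ⟨m, hm, ⟨γ, rfl⟩, rfl⟩
    exact ⟨γ, hm, rfl⟩

theorem finrank_restrictTotalDegree (N : ℕ) :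
    Module.finrank ℝ (restrictTotalDegree (Fin d) ℝ N) = Fintype.card (IdxLe d N) := by
  refine (Module.finrank_eq_nat_card_basis (basisRestrictSupport ℝ _)).trans ?_
  rw [← Nat.card_eq_fintype_card]
  exact Nat.card_congr (Finsupp.equivFunOnFinite.subtypeEquiv fun s => by
    simp [Finsupp.sum_fintype])

theorem linearIndepOn_ofMultiIndex (hspan : SpansPi P) (N : ℕ) :
    LinearIndepOn ℝ (ofMultiIndex P) {γ | ∑ i, γ i ≤ N} := by
  let _ : Fintype {γ : Fin d → ℕ | ∑ i, γ i ≤ N} := inferInstanceAs (Fintype (IdxLe d N))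
  rw [LinearIndepOn, linearIndependent_iff_card_eq_finrank_span, Set.finrank,
    ← Set.image_eq_range, span_image_ofMultiIndex hspan, finrank_restrictTotalDegree]
  rfl

theorem linearIndependent_ofMultiIndex (hspan : SpansPi P) :
    LinearIndependent ℝ (ofMultiIndex P) := by
  have hcover : ⋃ N, {γ : Fin d → ℕ | ∑ i, γ i ≤ N} = Set.univ :=
    Set.iUnion_eq_univ_iff.2 fun γ => ⟨∑ i, γ i, by simp⟩
  rw [← linearIndepOn_univ_iff, ← hcover]
  exact linearIndepOn_iUnion_of_directed
    (Monotone.directed_le fun _ _ h _ hγ => le_trans hγ h) (linearIndepOn_ofMultiIndex hspan)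

theorem top_le_span_ofMultiIndex (hspan : SpansPi P) :
    ⊤ ≤ Submodule.span ℝ (Set.range (ofMultiIndex P)) := fun p _ =>
  Submodule.span_mono (Set.image_subset_range _ _)
    ((span_image_ofMultiIndex hspan p.totalDegree).symm ▸
      (mem_restrictTotalDegree _ _ _).2 le_rfl)

def degreeBasis (hspan : SpansPi P) : Module.Basis (Fin d → ℕ) ℝ (MPoly d) :=
  .mk (linearIndependent_ofMultiIndex hspan) (top_le_span_ofMultiIndex hspan)

theorem coe_degreeBasis (hspan : SpansPi P) : ⇑(degreeBasis hspan) = ofMultiIndex P :=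
  Module.Basis.coe_mk _ _

theorem P_eq_degreeBasis (hspan : SpansPi P) {n : ℕ} (α : Idx d n) :
    P n α = degreeBasis hspan α.1 := by
  rw [coe_degreeBasis, ofMultiIndex_of_sum_eq α.2]

theorem linearIndependent_P (hspan : SpansPi P) (n : ℕ) : LinearIndependent ℝ (P n) := by
  convert (degreeBasis hspan).linearIndependent.comp _ Subtype.val_injective
  exact funext fun α => P_eq_degreeBasis hspan α

theorem mem_restrictTotalDegree_iff_repr (hspan : SpansPi P) {p : MPoly d} {N : ℕ} :
    p ∈ restrictTotalDegree (Fin d) ℝ N ↔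
      ∀ γ, N < ∑ i, γ i → (degreeBasis hspan).repr p γ = 0 := by
  rw [← span_image_ofMultiIndex hspan, ← coe_degreeBasis hspan, Module.Basis.mem_span_image,
    Finsupp.support_subset_iff]
  simp only [Set.mem_ofPred_eq, not_le]

theorem repr_sum_smul_P (hspan : SpansPi P) {k : ℕ} (c : Idx d k → ℝ) (γ : Fin d → ℕ) :
    (degreeBasis hspan).repr (∑ β, c β • P k β) γ =
      if h : ∑ i, γ i = k then c ⟨γ, h⟩ else 0 := by
  simp only [P_eq_degreeBasis hspan, map_sum, map_smul, Module.Basis.repr_self,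
    Finsupp.finsetSum_apply, Finsupp.smul_apply, Finsupp.single_apply, smul_eq_mul, mul_ite,
    mul_one, mul_zero]
  split_ifs with h
  · rw [Fintype.sum_eq_single ⟨γ, h⟩ fun β hβ => if_neg fun e => hβ (Subtype.ext e), if_pos rfl]
  · exact Finset.sum_eq_zero fun β _ => if_neg fun (e : β.1 = γ) => h (e ▸ β.2)

theorem eq_zero_of_sum_smul_P_mem (hspan : SpansPi P) {m n : ℕ} (hmn : m < n)
    {g : Idx d n → ℝ} (hg : ∑ α, g α • P n α ∈ restrictTotalDegree (Fin d) ℝ m) : g = 0 := by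
  funext α
  have := (mem_restrictTotalDegree_iff_repr hspan).1 hg α.1 (hmn.trans_eq α.2.symm)
  rwa [repr_sum_smul_P, dif_pos α.2] at this

theorem P_mem_restrictTotalDegree (hspan : SpansPi P) {n : ℕ} (α : Idx d n) :
    P n α ∈ restrictTotalDegree (Fin d) ℝ n :=
  hspan n ▸ Submodule.subset_span ⟨n, le_rfl, α, rfl⟩

theorem sum_smul_P_mem (hspan : SpansPi P) {n : ℕ} (g : Idx d n → ℝ) :
    ∑ β, g β • P n β ∈ restrictTotalDegree (Fin d) ℝ n :=
  Submodule.sum_mem _ fun β _ => Submodule.smul_mem _ _ (P_mem_restrictTotalDegree hspan β)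

theorem map_mul_sum_smul (L : MPoly d →ₗ[ℝ] ℝ) (f : MPoly d) {k : ℕ} (g : Idx d k → ℝ) :
    L (f * ∑ β, g β • P k β) = ∑ β, g β * L (f * P k β) := by
  simp [Finset.mul_sum]

section Orthogonality

variable (L : MPoly d →ₗ[ℝ] ℝ) (P)

def IsOrthonormal : Prop :=
  ∀ γ δ : Fin d → ℕ, L (ofMultiIndex P γ * ofMultiIndex P δ) = if γ = δ then 1 else 0

def OrthogonalToLowerDegree : Prop :=
  ∀ m n, m < n → ∀ f ∈ restrictTotalDegree (Fin d) ℝ m, ∀ α : Idx d n, L (f * P n α) = 0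

variable {L P}

theorem isOrthonormal_of
    (hon : ∀ n (α β : Idx d n), L (P n α * P n β) = if α = β then 1 else 0)
    (hoff : ∀ n m : ℕ, n ≠ m → ∀ (α : Idx d n) (β : Idx d m), L (P n α * P m β) = 0) :
    IsOrthonormal P L := by
  intro γ δ
  by_cases h : ∑ i, γ i = ∑ i, δ i
  · rw [ofMultiIndex_of_sum_eq h, ofMultiIndex, hon]
    simp only [Subtype.mk.injEq]
  · rw [if_neg (fun e : γ = δ => h (e ▸ rfl)), ofMultiIndex, ofMultiIndex, hoff _ _ h]

theorem IsOrthonormal.map_mul_degreeBasis (h : IsOrthonormal P L) (hspan : SpansPi P) :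
    ∀ γ δ, L (degreeBasis hspan γ * degreeBasis hspan δ) = if γ = δ then 1 else 0 := by
  rwa [Favard.coe_degreeBasis]

theorem IsOrthonormal.repr_eq (h : IsOrthonormal P L) (hspan : SpansPi P) (p : MPoly d)
    (γ : Fin d → ℕ) : (degreeBasis hspan).repr p γ = L (p * ofMultiIndex P γ) := by
  rw [(degreeBasis hspan).repr_apply_eq_of_orthonormal (h.map_mul_degreeBasis hspan),
    Favard.coe_degreeBasis]

theorem IsOrthonormal.orthogonalToLowerDegree (h : IsOrthonormal P L) (hspan : SpansPi P) :
    OrthogonalToLowerDegree P L := by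
  intro m n hmn f hf α
  rw [← ofMultiIndex_of_sum_eq (P := P) α.2, ← h.repr_eq hspan]
  exact (mem_restrictTotalDegree_iff_repr hspan).1 hf _ (hmn.trans_eq α.2.symm)

theorem OrthogonalToLowerDegree.map_mul_eq_zero (h : OrthogonalToLowerDegree P L)
    (hspan : SpansPi P) {n m : ℕ} (hnm : n ≠ m) (α : Idx d n) (β : Idx d m) :
    L (P n α * P m β) = 0 := by
  rcases hnm.lt_or_gt with hlt | hlt
  · exact h n m hlt _ (P_mem_restrictTotalDegree hspan α) β
  · rw [mul_comm]
    exact h m n hlt _ (P_mem_restrictTotalDegree hspan β) α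

end Orthogonality

def ThreeTermRecurrence (P : ∀ n, Idx d n → MPoly d)
    (A : ∀ n : ℕ, Fin d → Matrix (Idx d n) (Idx d (n+1)) ℝ)
    (B : ∀ n : ℕ, Fin d → Matrix (Idx d n) (Idx d n) ℝ) : Prop :=
  ∀ (n : ℕ) (i : Fin d) (α : Idx d (n+1)), X i * P (n+1) α =
    (∑ β : Idx d (n+2), A (n+1) i α β • P (n+2) β) +
    (∑ β : Idx d (n+1), B (n+1) i α β • P (n+1) β) +
    ∑ β : Idx d n, (A n i)ᵀ α β • P n β

section Forward

variable (P) (L : MPoly d →ₗ[ℝ] ℝ)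

def recA (n : ℕ) (i : Fin d) : Matrix (Idx d n) (Idx d (n + 1)) ℝ :=
  of fun α β => L (X i * P n α * P (n + 1) β)

def recB (n : ℕ) (i : Fin d) : Matrix (Idx d n) (Idx d n) ℝ :=
  of fun α β => L (X i * P n α * P n β)

theorem isSymm_recB (n : ℕ) (i : Fin d) : (recB P L n i).IsSymm :=
  IsSymm.ext fun _ _ => congrArg L (by ring)

variable {P L}

theorem IsOrthonormal.eq_sum_range (h : IsOrthonormal P L) (hspan : SpansPi P) {p : MPoly d}
    {N : ℕ} (hp : p ∈ restrictTotalDegree (Fin d) ℝ N) :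
    p = ∑ k ∈ Finset.range (N + 1), ∑ β : Idx d k, L (p * P k β) • P k β := by
  apply (degreeBasis hspan).repr.injective
  ext γ
  rw [map_sum, Finsupp.finsetSum_apply]
  simp only [repr_sum_smul_P hspan]
  rw [Finset.sum_dite_eq, h.repr_eq]
  split_ifs with hγ
  · rfl
  · rw [← h.repr_eq hspan]
    exact (mem_restrictTotalDegree_iff_repr hspan).1 hp γ (by simpa using hγ)

theorem IsOrthonormal.mem_restrictTotalDegree_of_forall (h : IsOrthonormal P L)
    (hspan : SpansPi P) {q : MPoly d} {N : ℕ} (hq : q ∈ restrictTotalDegree (Fin d) ℝ (N + 1))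
    (hperp : ∀ β : Idx d (N + 1), L (q * P (N + 1) β) = 0) :
    q ∈ restrictTotalDegree (Fin d) ℝ N := by
  rw [mem_restrictTotalDegree_iff_repr hspan] at hq ⊢
  intro γ hγ
  rcases (Nat.succ_le_of_lt hγ).eq_or_lt with hγ' | hγ'
  · rw [h.repr_eq hspan, ofMultiIndex_of_sum_eq hγ'.symm]
    exact hperp _
  · exact hq γ hγ'

theorem IsOrthonormal.X_mul_P_zero (h : IsOrthonormal P L) (hspan : SpansPi P) (i : Fin d)
    (α : Idx d 0) : X i * P 0 α =
      (∑ β : Idx d 1, recA P L 0 i α β • P 1 β) + ∑ β : Idx d 0, recB P L 0 i α β • P 0 β := by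
  refine (h.eq_sum_range hspan
    (X_mul_mem_restrictTotalDegree i (P_mem_restrictTotalDegree hspan α))).trans ?_
  simp only [Finset.sum_range_succ, Finset.sum_range_zero, zero_add]
  exact add_comm _ _

theorem IsOrthonormal.threeTermRecurrence (h : IsOrthonormal P L) (hspan : SpansPi P) :
    ThreeTermRecurrence P (recA P L) (recB P L) := by
  intro n i α
  refine (h.eq_sum_range hspan
    (X_mul_mem_restrictTotalDegree i (P_mem_restrictTotalDegree hspan α))).trans ?_
  rw [Finset.sum_range_succ, Finset.sum_range_succ, Finset.sum_range_succ,
    Finset.sum_eq_zero fun k hk => Finset.sum_eq_zero fun β _ => ?_, zero_add]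
  · have hT : ∀ β, (recA P L n i)ᵀ α β = L (X i * P (n + 1) α * P n β) :=
      fun β => congrArg L (by ring)
    simp only [hT]
    simp only [recA, recB, of_apply]
    abel
  · rw [show X i * P (n + 1) α * P k β = X i * P k β * P (n + 1) α by ring,
      h.orthogonalToLowerDegree hspan (k + 1) (n + 1) (by simpa using hk) _
        (X_mul_mem_restrictTotalDegree i (P_mem_restrictTotalDegree hspan β)) α, zero_smul]

theorem IsOrthonormal.rank_recA (h : IsOrthonormal P L) (hspan : SpansPi P) (n : ℕ)
    (i : Fin d) : (recA P L n i).rank = Fintype.card (Idx d n) := by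
  rw [← rank_transpose, rank_eq_card_width_iff]
  intro g hg
  have hXp : X i * ∑ α, g α • P n α ∈ restrictTotalDegree (Fin d) ℝ n := by
    refine h.mem_restrictTotalDegree_of_forall hspan
      (X_mul_mem_restrictTotalDegree i (sum_smul_P_mem hspan g)) fun β => ?_
    calc L (X i * (∑ α, g α • P n α) * P (n + 1) β)
        = L (P (n + 1) β * X i * ∑ α, g α • P n α) := by ring_nf
      _ = ∑ α, g α * L (P (n + 1) β * X i * P n α) := map_mul_sum_smul L _ g
      _ = ((recA P L n i)ᵀ *ᵥ g) β :=
        Finset.sum_congr rfl fun α _ => by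
          rw [mul_comm]
          exact congrArg (· * g α) (congrArg L (by ring))
      _ = 0 := congrFun hg β
  rcases isDegLt_of_X_mul_mem i hXp with hp | hp
  · exact funext (Fintype.linearIndependent_iff.1 (linearIndependent_P hspan n) g hp)
  · exact eq_zero_of_sum_smul_P_mem hspan hp ((mem_restrictTotalDegree _ _ _).2 le_rfl)

theorem IsOrthonormal.rank_stack_recA (h : IsOrthonormal P L) (hspan : SpansPi P) (n : ℕ) :
    (stack (recA P L n)).rank = Fintype.card (Idx d (n + 1)) := by
  rw [rank_eq_card_width_iff]
  intro g hg
  set q := ∑ β, g β • P (n + 1) β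
  have hlow : restrictTotalDegree (Fin d) ℝ n ≤ LinearMap.ker (L ∘ₗ LinearMap.mulRight ℝ q) :=
    fun f hf => by
      simp only [LinearMap.mem_ker, LinearMap.comp_apply, LinearMap.mulRight_apply, q,
        map_mul_sum_smul, h.orthogonalToLowerDegree hspan n (n + 1) n.lt_succ_self f hf,
        mul_zero, Finset.sum_const_zero]
  have hX (i : Fin d) : restrictTotalDegree (Fin d) ℝ n ≤
      (LinearMap.ker (L ∘ₗ LinearMap.mulRight ℝ q)).comap (LinearMap.mulLeft ℝ (X i)) := by
    rw [← hspan n, Submodule.span_le]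
    rintro _ ⟨k, hk, α, rfl⟩
    simp only [SetLike.mem_coe, Submodule.mem_comap, LinearMap.mem_ker, LinearMap.comp_apply,
      LinearMap.mulRight_apply, LinearMap.mulLeft_apply]
    rcases hk.lt_or_eq with hk | rfl
    · exact hlow (restrictTotalDegree_mono _ _ hk
        (X_mul_mem_restrictTotalDegree i (P_mem_restrictTotalDegree hspan α)))
    · rw [map_mul_sum_smul]
      simpa [mulVec, dotProduct, stack, recA, mul_comm] using congrFun hg (i, α)
  have hperp : restrictTotalDegree (Fin d) ℝ (n + 1) ≤
      LinearMap.ker (L ∘ₗ LinearMap.mulRight ℝ q) :=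
    (restrictTotalDegree_succ_le _ _ n).trans
      (sup_le hlow (iSup_le fun i => Submodule.map_le_iff_le_comap.2 (hX i)))
  refine eq_zero_of_sum_smul_P_mem hspan n.lt_succ_self
    (h.mem_restrictTotalDegree_of_forall hspan (sum_smul_P_mem hspan g) fun β => ?_)
  rw [mul_comm]
  exact hperp (P_mem_restrictTotalDegree hspan β)

end Forward

section Backward

variable {L : MPoly d →ₗ[ℝ] ℝ} {A : ∀ n : ℕ, Fin d → Matrix (Idx d n) (Idx d (n+1)) ℝ}
  {B : ∀ n : ℕ, Fin d → Matrix (Idx d n) (Idx d n) ℝ}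

theorem coord_degreeBasis_zero_P (hspan : SpansPi P) {n : ℕ} (hn : 0 < n) (α : Idx d n) :
    (degreeBasis hspan).coord 0 (P n α) = 0 := by
  rw [P_eq_degreeBasis hspan, Module.Basis.coord_apply, Module.Basis.repr_self,
    Finsupp.single_apply, if_neg]
  intro h0
  have := α.2
  simp [h0] at this
  omega

theorem coord_degreeBasis_zero_one (hspan : SpansPi P) (hP0 : ∀ α : Idx d 0, P 0 α = 1) :
    (degreeBasis hspan).coord 0 1 = 1 := by
  rw [← hP0 ⟨0, by simp⟩, P_eq_degreeBasis hspan, Module.Basis.coord_apply,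
    Module.Basis.repr_self, Finsupp.single_eq_same]

theorem orthogonalToLowerDegree_of_threeTermRecurrence (hrec : ThreeTermRecurrence P A B)
    (hL : ∀ n, 0 < n → ∀ α : Idx d n, L (P n α) = 0) : OrthogonalToLowerDegree P L := by
  intro m
  induction m with
  | zero =>
    intro n hn f hf α
    rw [totalDegree_eq_zero_iff_eq_C.1 (Nat.le_zero.1 ((mem_restrictTotalDegree _ _ _).1 hf)),
      C_mul', map_smul, hL n hn α, smul_zero]
  | succ m ih =>
    intro n hn f hf α
    obtain ⟨n, rfl⟩ : ∃ k, n = k + 1 + 1 := ⟨n - 2, by omega⟩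
    have hX (i : Fin d) : restrictTotalDegree (Fin d) ℝ m ≤
        (LinearMap.ker (L ∘ₗ LinearMap.mulRight ℝ (P (n + 1 + 1) α))).comap
          (LinearMap.mulLeft ℝ (X i)) := fun g hg => by
      simp only [Submodule.mem_comap, LinearMap.mem_ker, LinearMap.comp_apply,
        LinearMap.mulRight_apply, LinearMap.mulLeft_apply]
      rw [show X i * g * P (n + 1 + 1) α = g * (X i * P (n + 1 + 1) α) by ring, hrec (n + 1) i α]
      simp [mul_add, map_mul_sum_smul, ih (n + 1 + 2) (by omega) g hg,
        ih (n + 1 + 1) (by omega) g hg, ih (n + 1) (by omega) g hg]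
    exact ((restrictTotalDegree_succ_le _ _ m).trans (sup_le (fun g hg => ih _ (by omega) g hg α)
      (iSup_le fun i => Submodule.map_le_iff_le_comap.2 (hX i)))) hf

theorem X_mul_P_sub_sum_mem (hspan : SpansPi P)
    (hrec0 : ∀ (i : Fin d) (α : Idx d 0), X i * P 0 α =
      (∑ β : Idx d 1, A 0 i α β • P 1 β) + ∑ β : Idx d 0, B 0 i α β • P 0 β)
    (hrec : ThreeTermRecurrence P A B) (n : ℕ) (i : Fin d) (α : Idx d n) :
    X i * P n α - ∑ γ, A n i α γ • P (n + 1) γ ∈ restrictTotalDegree (Fin d) ℝ n := by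
  cases n with
  | zero =>
    rw [hrec0 i α, add_sub_cancel_left]
    exact sum_smul_P_mem hspan _
  | succ n =>
    rw [hrec n i α, add_assoc, add_sub_cancel_left]
    exact add_mem (sum_smul_P_mem hspan _)
      (restrictTotalDegree_mono _ _ n.le_succ (sum_smul_P_mem hspan _))

theorem map_X_mul_P_mul_P_succ_eq_A (hspan : SpansPi P)
    (horth : OrthogonalToLowerDegree P L) (hrec : ThreeTermRecurrence P A B) {n : ℕ}
    (hon : ∀ α β : Idx d n, L (P n α * P n β) = if α = β then 1 else 0)
    (i : Fin d) (α : Idx d n) (β : Idx d (n + 1)) :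
    L (X i * P n α * P (n + 1) β) = A n i α β := by
  have hlow (k : ℕ) (hk : n < k) := horth n k hk _ (P_mem_restrictTotalDegree hspan α)
  rw [show X i * P n α * P (n + 1) β = P n α * (X i * P (n + 1) β) by ring, hrec n i β]
  simp [mul_add, map_mul_sum_smul, hlow (n + 2) (by omega), hlow (n + 1) (by omega), hon]

theorem map_X_mul_P_mul_P_succ_eq_sum (horth : OrthogonalToLowerDegree P L) {n : ℕ} (i : Fin d)
    (α : Idx d n) (β : Idx d (n + 1))
    (hsub : X i * P n α - ∑ γ, A n i α γ • P (n + 1) γ ∈ restrictTotalDegree (Fin d) ℝ n) :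
    L (X i * P n α * P (n + 1) β) = ∑ γ, A n i α γ * L (P (n + 1) γ * P (n + 1) β) := by
  have := horth n (n + 1) n.lt_succ_self _ hsub β
  rw [sub_mul, map_sub, sub_eq_zero] at this
  simp [this, Finset.sum_mul]

theorem map_P_mul_P_eq_ite (hspan : SpansPi P) (hP0 : ∀ α : Idx d 0, P 0 α = 1) (hL1 : L 1 = 1)
    (horth : OrthogonalToLowerDegree P L) (hrec : ThreeTermRecurrence P A B)
    (hsub : ∀ n i (α : Idx d n),
      X i * P n α - ∑ γ, A n i α γ • P (n + 1) γ ∈ restrictTotalDegree (Fin d) ℝ n)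
    (hstack : ∀ n, (stack (A n)).rank = Fintype.card (Idx d (n + 1))) :
    ∀ n (α β : Idx d n), L (P n α * P n β) = if α = β then 1 else 0 := by
  intro n
  induction n with
  | zero =>
    have hzero (γ : Idx d 0) : γ.1 = 0 :=
      funext fun j => Finset.sum_eq_zero_iff.1 γ.2 j (Finset.mem_univ j)
    intro α β
    rw [hP0, hP0, one_mul, hL1, if_pos (Subtype.ext ((hzero α).trans (hzero β).symm))]
  | succ n ih =>
    intro γ β
    refine sub_eq_zero.1 (congrFun (rank_eq_card_width_iff.1 (hstack n)
      (fun δ => L (P (n + 1) δ * P (n + 1) β) - if δ = β then 1 else 0) ?_) γ)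
    funext ⟨i, α⟩
    simp only [mulVec, dotProduct, stack, of_apply, mul_sub, Finset.sum_sub_distrib, mul_ite,
      mul_one, mul_zero, Finset.sum_ite_eq', Finset.mem_univ, if_true, Pi.zero_apply]
    rw [← map_X_mul_P_mul_P_succ_eq_sum horth i α β (hsub n i α),
      map_X_mul_P_mul_P_succ_eq_A hspan horth hrec ih, sub_self]

end Backward

end Favard

/-- Favard's theorem for orthogonal polynomials of several variables: a degree-wise spanning
sequence `{ℙ_n}` with `ℙ_0 = 1` is orthonormal for some positive definite linear functional
if and only if it satisfies a three-term relation
`x_i ℙ_n = A_{n,i} ℙ_{n+1} + B_{n,i} ℙ_n + A_{n-1,i}ᵀ ℙ_{n-1}` with symmetric `B_{n,i}`,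
`rank A_{n,i} = r_n^d` and the stacked matrix `A_n` of rank `r_{n+1}^d`. -/
theorem favard_theorem_several_variables
    (P : ∀ n, Idx d n → MPoly d)
    (hP0 : ∀ α : Idx d 0, P 0 α = 1)
    (hspan : SpansPi P) :
    (∃ L : MPoly d →ₗ[ℝ] ℝ,
      (∀ p : MPoly d, p ≠ 0 → 0 < L (p * p)) ∧
      (∀ n (α β : Idx d n), L (P n α * P n β) = if α = β then 1 else 0) ∧
      (∀ n m : ℕ, n ≠ m → ∀ (α : Idx d n) (β : Idx d m), L (P n α * P m β) = 0)) ↔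
    (∃ (A : ∀ n : ℕ, Fin d → Matrix (Idx d n) (Idx d (n+1)) ℝ)
       (B : ∀ n : ℕ, Fin d → Matrix (Idx d n) (Idx d n) ℝ),
      (∀ (n : ℕ) (i : Fin d), (B n i).IsSymm) ∧
      (∀ (i : Fin d) (α : Idx d 0), X i * P 0 α =
        (∑ β : Idx d 1, A 0 i α β • P 1 β) + ∑ β : Idx d 0, B 0 i α β • P 0 β) ∧
      (∀ (n : ℕ) (i : Fin d) (α : Idx d (n+1)), X i * P (n+1) α =
        (∑ β : Idx d (n+2), A (n+1) i α β • P (n+2) β) +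
        (∑ β : Idx d (n+1), B (n+1) i α β • P (n+1) β) +
        ∑ β : Idx d n, (A n i)ᵀ α β • P n β) ∧
      (∀ (n : ℕ) (i : Fin d), (A n i).rank = Fintype.card (Idx d n)) ∧
      (∀ n : ℕ,
        (Matrix.of fun (p : Fin d × Idx d n) (β : Idx d (n+1)) => A n p.1 p.2 β).rank =
          Fintype.card (Idx d (n+1)))) := by
  constructor
  · rintro ⟨L, -, hon, hoff⟩
    have h := Favard.isOrthonormal_of hon hoff
    exact ⟨Favard.recA P L, Favard.recB P L, Favard.isSymm_recB P L, h.X_mul_P_zero hspan,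
      h.threeTermRecurrence hspan, h.rank_recA hspan, h.rank_stack_recA hspan⟩
  · rintro ⟨A, B, -, hrec0, hrec, -, hstack⟩
    let L := (Favard.degreeBasis hspan).coord 0
    have horth : Favard.OrthogonalToLowerDegree P L :=
      Favard.orthogonalToLowerDegree_of_threeTermRecurrence hrec
        fun _ hn => Favard.coord_degreeBasis_zero_P hspan hn
    have hon := Favard.map_P_mul_P_eq_ite hspan hP0 (Favard.coord_degreeBasis_zero_one hspan hP0)
      horth hrec (Favard.X_mul_P_sub_sum_mem hspan hrec0 hrec) hstack
    have hoff : ∀ n m : ℕ, n ≠ m → ∀ (α : Idx d n) (β : Idx d m), L (P n α * P m β) = 0 :=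
      fun _ _ hnm => horth.map_mul_eq_zero hspan hnm
    exact ⟨L, fun _ hp => (Favard.degreeBasis hspan).map_mul_self_pos_of_orthonormal
      ((Favard.isOrthonormal_of hon hoff).map_mul_degreeBasis hspan) hp, hon, hoff⟩
end
end

section
/- Let L be a positive definite moment functional on real polynomials in d variables, let {ℙ_n} be an orthonormal family with respect to L (each P_α^n of degree n, spanning Π_n^d degree-wise, L(P_α^n P_β^m) = δ_{n,m} δ_{α,β}), and let A_{n,i}, B_{n,i} be the coefficient matrices of the three-term relation x_i ℙ_n = A_{n,i} ℙ_{n+1} + B_{n,i} ℙ_n + A_{n−1,i}ᵀ ℙ_{n−1} (with A_{−1,i} := 0). Then for all 1 ≤ i, j ≤ d and all k ≥ 0 the following commutativity relations hold: (i) A_{k,i} A_{k+1,j} = A_{k,j} A_{k+1,i}; (ii) A_{k,i} B_{k+1,j} + B_{k,i} A_{k,j} = B_{k,j} A_{k,i} + A_{k,j} B_{k+1,i}; (iii) A_{k−1,i}ᵀ A_{k−1,j} + B_{k,i} B_{k,j} + A_{k,i} A_{k,j}ᵀ = A_{k−1,j}ᵀ A_{k−1,i} + B_{k,j} B_{k,i}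 + A_{k,j} A_{k,i}ᵀ. -/
/-!
Put `f = x_i P_α^n` and `g = x_j P_β^m`. Since `f` has degree at most `n + 1`, expanding it in
the orthonormal family gives Parseval's identity `L(f g) = Σ_{l,γ} L(f P_γ^l) L(g P_γ^l)`, and by
orthogonality only the degrees `m - 1 ≤ l ≤ n + 1` contribute. For each pair of degrees `(n, m)`
occurring in the relations, this sum is the `(α, β)` entry of the left-hand side, which is
therefore `L(x_i x_j P_α^n P_β^m)`: symmetric in `i` and `j`.
-/

open MvPolynomial Matrix MeasureTheory

noncomputable section

variable {d : ℕ}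

theorem totalDegree_X_mul_le {P : ∀ n, Idx d n → MPoly d}
    (hdeg : ∀ n (α : Idx d n), (P n α).totalDegree ≤ n) (i : Fin d) {n : ℕ} (α : Idx d n) :
    (X i * P n α).totalDegree ≤ n + 1 :=
  (totalDegree_mul _ _).trans <| by
    rw [totalDegree_X, add_comm]
    exact Nat.add_le_add_right (hdeg n α) 1

section Orthonormal

variable {L : MPoly d →ₗ[ℝ] ℝ} {P : ∀ n, Idx d n → MPoly d}
  (hspan : SpansPi P)
  (hon : ∀ n (α β : Idx d n), L (P n α * P n β) = if α = β then 1 else 0)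
  (hoff : ∀ n m : ℕ, n ≠ m → ∀ (α : Idx d n) (β : Idx d m), L (P n α * P m β) = 0)
include hspan hon hoff

theorem orthonormal_expansion {n : ℕ} {p : MPoly d} (hp : p.totalDegree ≤ n) :
    p = ∑ m ∈ Finset.range (n + 1), ∑ α : Idx d m, L (p * P m α) • P m α := by
  let expansion : MPoly d →ₗ[ℝ] MPoly d := ∑ m ∈ Finset.range (n + 1), ∑ α : Idx d m,
    (L.comp (LinearMap.mulRight ℝ (P m α))).smulRight (P m α)
  have h_gen : Set.EqOn (LinearMap.id : MPoly d →ₗ[ℝ] MPoly d) expansion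
      {q | ∃ m ≤ n, ∃ α : Idx d m, q = P m α} := by
    rintro _ ⟨m, hm, α, rfl⟩
    have h_other : ∀ m' ∈ Finset.range (n + 1), m' ≠ m →
        ∑ α' : Idx d m', L (P m α * P m' α') • P m' α' = 0 := fun m' _ hm' =>
      Finset.sum_eq_zero fun α' _ => by rw [hoff m m' hm'.symm, zero_smul]
    simp [expansion, Finset.sum_eq_single_of_mem m (by simp; omega) h_other, hon]
  have hp_mem : p ∈ Submodule.span ℝ {q | ∃ m ≤ n, ∃ α : Idx d m, q = P m α} := by
    rw [hspan n, mem_restrictTotalDegree]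
    exact hp
  simpa [expansion] using LinearMap.eqOn_span h_gen hp_mem

theorem map_mul_eq_sum {n : ℕ} {p : MPoly d} (hp : p.totalDegree ≤ n) (q : MPoly d) :
    L (p * q) =
      ∑ m ∈ Finset.range (n + 1), ∑ α : Idx d m, L (p * P m α) * L (q * P m α) := by
  conv_lhs => rw [mul_comm, orthonormal_expansion hspan hon hoff hp]
  simp only [Finset.mul_sum, mul_smul_comm, map_sum, map_smul, smul_eq_mul]

theorem map_mul_eq_zero_of_totalDegree_lt {m : ℕ} {p : MPoly d} (hp : p.totalDegree < m)
    (β : Idx d m) : L (p * P m β) = 0 := by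
  rw [map_mul_eq_sum hspan hon hoff le_rfl]
  refine Finset.sum_eq_zero fun l hl => Finset.sum_eq_zero fun γ _ => ?_
  rw [hoff m l (by simp at hl; omega), mul_zero]

theorem map_mul_eq_sum_Ico {a n : ℕ} {p : MPoly d} (hp : p.totalDegree ≤ n) {q : MPoly d}
    (hq : ∀ l < a, ∀ γ : Idx d l, L (q * P l γ) = 0) :
    L (p * q) =
      ∑ l ∈ Finset.Ico a (n + 1), ∑ γ : Idx d l, L (p * P l γ) * L (q * P l γ) := by
  rw [map_mul_eq_sum hspan hon hoff hp]
  refine (Finset.sum_subset (fun l hl => Finset.mem_range.2 (Finset.mem_Ico.1 hl).2)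
    fun l _ hl => Finset.sum_eq_zero fun γ _ => ?_).symm
  rw [hq l (by simp_all) γ, mul_zero]

variable (hdeg : ∀ n (α : Idx d n), (P n α).totalDegree ≤ n)
include hdeg

theorem map_X_mul_mul_eq_zero {l m : ℕ} (h : l + 2 ≤ m) (j : Fin d) (β : Idx d m)
    (γ : Idx d l) : L (X j * P m β * P l γ) = 0 := by
  rw [mul_right_comm]
  exact map_mul_eq_zero_of_totalDegree_lt hspan hon hoff
    ((totalDegree_X_mul_le hdeg j γ).trans_lt (by omega)) β

theorem map_X_mul_mul_X_mul (i j : Fin d) {n m : ℕ} (α : Idx d n) (β : Idx d m) :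
    L (X i * P n α * (X j * P m β)) = ∑ l ∈ Finset.Ico (m - 1) (n + 2), ∑ γ : Idx d l,
      L (X i * P n α * P l γ) * L (X j * P m β * P l γ) :=
  map_mul_eq_sum_Ico hspan hon hoff (totalDegree_X_mul_le hdeg i α)
    fun _ hl => map_X_mul_mul_eq_zero hspan hon hoff hdeg (by omega) j β

theorem Amat_mul_Amat_apply (k : ℕ) (i j : Fin d) (α : Idx d k) (β : Idx d (k + 2)) :
    (Amat L P k i * Amat L P (k + 1) j) α β = L (X i * P k α * (X j * P (k + 2) β)) := by
  rw [map_X_mul_mul_X_mul hspan hon hoff hdeg,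
    show Finset.Ico (k + 2 - 1) (k + 2) = {k + 1} by grind, Finset.sum_singleton]
  simp only [mul_apply, Amat, of_apply, mul_right_comm (X j) (P (k + 2) β)]

theorem Amat_mul_Bmat_add_Bmat_mul_Amat_apply (k : ℕ) (i j : Fin d) (α : Idx d k)
    (β : Idx d (k + 1)) :
    (Amat L P k i * Bmat L P (k + 1) j + Bmat L P k i * Amat L P k j) α β =
      L (X i * P k α * (X j * P (k + 1) β)) := by
  rw [map_X_mul_mul_X_mul hspan hon hoff hdeg,
    show Finset.Ico (k + 1 - 1) (k + 2) = {k, k + 1} by grind,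
    Finset.sum_pair (by omega), add_comm]
  simp only [Matrix.add_apply, mul_apply, Amat, Bmat, of_apply,
    mul_right_comm (X j) (P (k + 1) β)]

theorem Bmat_zero_mul_Bmat_zero_add_Amat_zero_mul_transpose_apply (i j : Fin d)
    (α β : Idx d 0) :
    (Bmat L P 0 i * Bmat L P 0 j + Amat L P 0 i * (Amat L P 0 j)ᵀ) α β =
      L (X i * P 0 α * (X j * P 0 β)) := by
  rw [map_X_mul_mul_X_mul hspan hon hoff hdeg,
    show Finset.Ico (0 - 1) (0 + 2) = {0, 1} by decide, Finset.sum_pair (by omega)]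
  simp only [Matrix.add_apply, mul_apply, transpose_apply, Amat, Bmat, of_apply,
    mul_right_comm (X j) (P 0 β)]

theorem transpose_Amat_mul_Amat_add_Bmat_mul_Bmat_add_Amat_mul_transpose_apply (k : ℕ)
    (i j : Fin d) (α β : Idx d (k + 1)) :
    ((Amat L P k i)ᵀ * Amat L P k j + Bmat L P (k + 1) i * Bmat L P (k + 1) j +
        Amat L P (k + 1) i * (Amat L P (k + 1) j)ᵀ) α β =
      L (X i * P (k + 1) α * (X j * P (k + 1) β)) := by
  rw [map_X_mul_mul_X_mul hspan hon hoff hdeg,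
    show Finset.Ico (k + 1 - 1) (k + 1 + 2) = {k, k + 1, k + 2} by grind,
    Finset.sum_insert (by simp), Finset.sum_pair (by omega), add_assoc]
  simp only [Matrix.add_apply, mul_apply, transpose_apply, Amat, Bmat, of_apply,
    mul_right_comm (X i) (P (k + 1) α), mul_right_comm (X j) (P (k + 1) β)]

end Orthonormal

/-- The third relation is stated for `k = 0` (with `A_{-1,i} := 0`) and, shifted by one,
for all `k ≥ 1`. -/
theorem three_term_coefficients_commutativity_relations_general
    (L : MPoly d →ₗ[ℝ] ℝ)
    (P : ∀ n, Idx d n → MPoly d)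
    (hdeg : ∀ n (α : Idx d n), (P n α).totalDegree = n)
    (hspan : SpansPi P)
    (hon : ∀ n (α β : Idx d n), L (P n α * P n β) = if α = β then 1 else 0)
    (hoff : ∀ n m : ℕ, n ≠ m → ∀ (α : Idx d n) (β : Idx d m), L (P n α * P m β) = 0) :
    (∀ (k : ℕ) (i j : Fin d),
      Amat L P k i * Amat L P (k+1) j = Amat L P k j * Amat L P (k+1) i) ∧
    (∀ (k : ℕ) (i j : Fin d),
      Amat L P k i * Bmat L P (k+1) j + Bmat L P k i * Amat L P k j =
        Bmat L P k j * Amat L P k i + Amat L P k j * Bmat L P (k+1) i) ∧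
    (∀ i j : Fin d,
      Bmat L P 0 i * Bmat L P 0 j + Amat L P 0 i * (Amat L P 0 j)ᵀ =
        Bmat L P 0 j * Bmat L P 0 i + Amat L P 0 j * (Amat L P 0 i)ᵀ) ∧
    (∀ (k : ℕ) (i j : Fin d),
      (Amat L P k i)ᵀ * Amat L P k j + Bmat L P (k+1) i * Bmat L P (k+1) j +
          Amat L P (k+1) i * (Amat L P (k+1) j)ᵀ =
        (Amat L P k j)ᵀ * Amat L P k i + Bmat L P (k+1) j * Bmat L P (k+1) i +
          Amat L P (k+1) j * (Amat L P (k+1) i)ᵀ) := by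
  have swap (i j : Fin d) {n m : ℕ} (α : Idx d n) (β : Idx d m) :
      L (X i * P n α * (X j * P m β)) = L (X j * P n α * (X i * P m β)) := by
    congr 1; ring
  replace hdeg : ∀ n (α : Idx d n), (P n α).totalDegree ≤ n := fun n α => (hdeg n α).le
  refine ⟨fun k i j => ?_, fun k i j => ?_, fun i j => ?_, fun k i j => ?_⟩ <;> ext α β
  · have entry := Amat_mul_Amat_apply hspan hon hoff hdeg k
    rw [entry i j, swap, ← entry j i]
  · have entry := Amat_mul_Bmat_add_Bmat_mul_Amat_apply hspan hon hoff hdeg k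
    rw [entry i j, swap, ← entry j i, add_comm]
  · have entry := Bmat_zero_mul_Bmat_zero_add_Amat_zero_mul_transpose_apply hspan hon hoff hdeg
    rw [entry i j, swap, ← entry j i]
  · have entry :=
      transpose_Amat_mul_Amat_add_Bmat_mul_Bmat_add_Amat_mul_transpose_apply hspan hon hoff hdeg k
    rw [entry i j, swap, ← entry j i]

/-- The commutativity relations satisfied by the coefficient matrices of the three-term
relation of an orthonormal family.  The third relation is stated for `k = 0`
(with `A_{-1,i} := 0`) and, shifted by one, for all `k ≥ 1`. -/
theorem three_term_coefficients_commutativity_relations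
    (L : MPoly d →ₗ[ℝ] ℝ)
    (hL : ∀ p : MPoly d, p ≠ 0 → 0 < L (p * p))
    (P : ∀ n, Idx d n → MPoly d)
    (hdeg : ∀ n (α : Idx d n), (P n α).totalDegree = n)
    (hspan : SpansPi P)
    (hon : ∀ n (α β : Idx d n), L (P n α * P n β) = if α = β then 1 else 0)
    (hoff : ∀ n m : ℕ, n ≠ m → ∀ (α : Idx d n) (β : Idx d m), L (P n α * P m β) = 0) :
    (∀ (k : ℕ) (i j : Fin d),
      Amat L P k i * Amat L P (k+1) j = Amat L P k j * Amat L P (k+1) i) ∧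
    (∀ (k : ℕ) (i j : Fin d),
      Amat L P k i * Bmat L P (k+1) j + Bmat L P k i * Amat L P k j =
        Bmat L P k j * Amat L P k i + Amat L P k j * Bmat L P (k+1) i) ∧
    (∀ i j : Fin d,
      Bmat L P 0 i * Bmat L P 0 j + Amat L P 0 i * (Amat L P 0 j)ᵀ =
        Bmat L P 0 j * Bmat L P 0 i + Amat L P 0 j * (Amat L P 0 i)ᵀ) ∧
    (∀ (k : ℕ) (i j : Fin d),
      (Amat L P k i)ᵀ * Amat L P k j + Bmat L P (k+1) i * Bmat L P (k+1) j +
          Amat L P (k+1) i * (Amat L P (k+1) j)ᵀ =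
        (Amat L P k j)ᵀ * Amat L P k i + Bmat L P (k+1) j * Bmat L P (k+1) i +
          Amat L P (k+1) j * (Amat L P (k+1) i)ᵀ) :=
  three_term_coefficients_commutativity_relations_general L P hdeg hspan hon hoff
end
end

section
/- Let L be a positive definite moment functional on real polynomials in d variables, let {ℙ_n} be an orthonormal family with respect to L, and let B_{n,i} = L(x_i ℙ_n ℙ_nᵀ) be the diagonal coefficient matrices of its three-term relation. Then L is centrally symmetric—i.e. L(x^α) = 0 for every multi-index α of odd total degree—if and only if B_{n,i} = 0 for all n ∈ ℕ and 1 ≤ i ≤ d. Furthermore, if L is centrally symmetric, then every polynomial P of degree n that is orthogonal with respect to L to all polynomials of degree less than n involves only monomials x^β with |β| ≡ n (mod 2): a sum of monomials of even total degrees if n is even, and of odd total degrees if n is odd. -/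
open MvPolynomial Matrix MeasureTheory

noncomputable section

variable {d : ℕ}

/-!
Grade the polynomial ring by `ZMod 2`, giving `x^μ` the parity of `|μ|`. If the odd moments of
degree `≤ 2n` vanish, an orthogonal polynomial `Q` of degree `n` is homogeneous for this grading:
its component `Q'` of the wrong parity has degree `< n`, so `L(Q'²) = L(Q Q') - L((Q - Q') Q') = 0`,
the last term being a combination of odd moments. Hence `x_i ℙ_n ℙ_nᵀ` is odd and `B_{n,i} = 0`.

Conversely, if all `B_{n,i}` vanish, induct on `n`: once the odd moments of degree `≤ 2n` vanish,
every `P_m` with `m ≤ n` is homogeneous, so a monomial of degree `n` lies in the span of the `P_m`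
with `m ≡ n (mod 2)`. Writing `x^γ = x_i x^μ x^ν` with `|μ| = |ν| = n`, the moment `L(x^γ)`
expands into terms `L(x_i P_m P_{m'})` with `m ≡ m'`; these are entries of `B_{m,i}` when
`m = m'` and vanish by orthogonality when `|m - m'| ≥ 2`.
-/

namespace MvPolynomial

variable {σ R : Type*} [CommSemiring R]

abbrev HasParity (p : MvPolynomial σ R) (r : ZMod 2) : Prop :=
  IsWeightedHomogeneous (fun _ => (1 : ZMod 2)) p r

abbrev parityComponent (r : ZMod 2) : MvPolynomial σ R →ₗ[R] MvPolynomial σ R :=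
  weightedHomogeneousComponent (fun _ => (1 : ZMod 2)) r

theorem weight_one_zmod_two (μ : σ →₀ ℕ) :
    Finsupp.weight (fun _ => (1 : ZMod 2)) μ = μ.degree := by
  simp [Finsupp.weight_apply, Finsupp.degree_apply, Finsupp.sum]

theorem hasParity_X (i : σ) : HasParity (X i : MvPolynomial σ R) 1 :=
  isWeightedHomogeneous_X R _ i

theorem hasParity_monomial (μ : σ →₀ ℕ) (c : R) : HasParity (monomial μ c) μ.degree :=
  isWeightedHomogeneous_monomial _ _ _ (weight_one_zmod_two μ)

theorem hasParity_parityComponent (r : ZMod 2) (p : MvPolynomial σ R) :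
    HasParity (parityComponent r p) r :=
  weightedHomogeneousComponent_isWeightedHomogeneous r p

theorem parityComponent_add_parityComponent_add_one (r : ZMod 2) (p : MvPolynomial σ R) :
    parityComponent r p + parityComponent (r + 1) p = p := by
  classical
  ext μ
  have key : ∀ a r : ZMod 2, a ≠ r → a = r + 1 := by decide
  simp only [coeff_add, coeff_weightedHomogeneousComponent]
  by_cases h : Finsupp.weight (fun _ => (1 : ZMod 2)) μ = r
  · simp [h]
  · simp [key _ _ h]

theorem totalDegree_parityComponent_le (r : ZMod 2) (p : MvPolynomial σ R) :
    (parityComponent r p).totalDegree ≤ p.totalDegree := by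
  classical
  exact totalDegree_le_of_support_subset
    ((support_weightedHomogeneousComponent r p).trans_subset (Finset.filter_subset _ _))

theorem HasParity.degree_eq {p : MvPolynomial σ R} {r : ZMod 2} (hp : HasParity p r)
    {μ : σ →₀ ℕ} (hμ : μ ∈ p.support) : (μ.degree : ZMod 2) = r :=
  weight_one_zmod_two μ ▸ hp (mem_support_iff.1 hμ)

theorem HasParity.totalDegree_lt {p : MvPolynomial σ R} {n : ℕ} (hp : HasParity p (n + 1))
    (hpn : p.totalDegree ≤ n) (hp0 : p ≠ 0) : p.totalDegree < n := by
  refine hpn.lt_of_ne fun hn => ?_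
  obtain ⟨μ, hμ, hμn⟩ := Finset.exists_mem_eq_sup _ (support_nonempty.2 hp0)
    fun μ : σ →₀ ℕ => μ.degree
  have hμdeg : μ.degree = n := hn ▸ hμn.symm
  have := hp.degree_eq hμ
  rw [hμdeg] at this
  simp at this

end MvPolynomial

section OddMoments

variable {σ R M : Type*} [CommSemiring R] [AddCommMonoid M] [Module R M]

def OddMomentsVanishUpTo (L : MvPolynomial σ R →ₗ[R] M) (N : ℕ) : Prop :=
  ∀ μ : σ →₀ ℕ, Odd μ.degree → μ.degree ≤ N → L (monomial μ 1) = 0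

variable {L : MvPolynomial σ R →ₗ[R] M} {N : ℕ}

theorem OddMomentsVanishUpTo.mono {N' : ℕ} (h : OddMomentsVanishUpTo L N) (hN : N' ≤ N) :
    OddMomentsVanishUpTo L N' :=
  fun μ hμ hμN => h μ hμ (hμN.trans hN)

theorem OddMomentsVanishUpTo.map_eq_zero (h : OddMomentsVanishUpTo L N)
    {p : MvPolynomial σ R} (hp : HasParity p 1) (hpN : p.totalDegree ≤ N) : L p = 0 := by
  rw [p.as_sum, map_sum]
  refine Finset.sum_eq_zero fun μ hμ => ?_
  rw [← mul_one (coeff μ p), ← smul_eq_mul, ← smul_monomial, map_smul,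
    h μ (ZMod.natCast_eq_one_iff_odd.1 (hp.degree_eq hμ)) ((le_totalDegree hμ).trans hpN),
    smul_zero]

end OddMoments

theorem LinearMap.map_mul_eq_zero_of_mem_span {R A M : Type*} [CommSemiring R] [Semiring A]
    [Algebra R A] [AddCommMonoid M] [Module R M] (L : A →ₗ[R] M) {S : Set A} {f g : A}
    (hg : g ∈ Submodule.span R S) (h : ∀ s ∈ S, L (f * s) = 0) : L (f * g) = 0 :=
  (Submodule.span_le (p := LinearMap.ker (L ∘ₗ LinearMap.mulLeft R f))).2 h hg

theorem Finsupp.exists_eq_single_add_add {σ : Type*} {γ : σ →₀ ℕ} {k m : ℕ}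
    (hγ : γ.degree = 1 + k + m) :
    ∃ i a b, a.degree = k ∧ b.degree = m ∧ γ = single i 1 + a + b := by
  obtain ⟨i, hi⟩ : ∃ i, γ i ≠ 0 := by
    by_contra! h
    have : γ = 0 := Finsupp.ext h
    simp only [this, map_zero] at hγ
    omega
  obtain ⟨ρ, rfl⟩ := le_iff_exists_add.1 (Finsupp.single_le_iff.2 (Nat.one_le_iff_ne_zero.2 hi))
  rw [map_add, degree_single] at hγ
  obtain ⟨a, haρ, ha⟩ := exists_le_degree_eq ρ k (by omega)
  obtain ⟨b, rfl⟩ := le_iff_exists_add.1 haρ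
  rw [map_add] at hγ
  exact ⟨i, a, b, ha, by omega, (add_assoc _ _ _).symm⟩

section OrthogonalFamily

def DegreewiseOrthogonal (L : MPoly d →ₗ[ℝ] ℝ) (P : ∀ n, Idx d n → MPoly d) : Prop :=
  ∀ n m : ℕ, n ≠ m → ∀ (α : Idx d n) (β : Idx d m), L (P n α * P m β) = 0

variable {L : MPoly d →ₗ[ℝ] ℝ} {P : ∀ n, Idx d n → MPoly d}

theorem SpansPi.totalDegree_le_s10 (hspan : SpansPi P) (n : ℕ) (α : Idx d n) :
    (P n α).totalDegree ≤ n :=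
  (mem_restrictTotalDegree _ _ _).1 (hspan n ▸ Submodule.subset_span ⟨n, le_rfl, α, rfl⟩)

theorem SpansPi.map_mul_eq_zero_of_isDegLt (hspan : SpansPi P)
    (hoff : DegreewiseOrthogonal L P)
    {n : ℕ} (α : Idx d n) {R : MPoly d} (hR : IsDegLt R n) : L (P n α * R) = 0 := by
  rcases hR with rfl | hR
  · rw [mul_zero, map_zero]
  obtain ⟨k, rfl⟩ : ∃ k, n = k + 1 := ⟨n - 1, by omega⟩
  have hRk : R ∈ restrictTotalDegree (Fin d) ℝ k := (mem_restrictTotalDegree _ _ _).2 (by omega)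
  rw [← hspan k] at hRk
  refine L.map_mul_eq_zero_of_mem_span hRk ?_
  rintro _ ⟨m, hm, β, rfl⟩
  exact hoff (k + 1) m (by omega) α β

theorem hasParity_of_forall_isDegLt (hL : ∀ p : MPoly d, p ≠ 0 → 0 < L (p * p)) {n : ℕ}
    (hodd : OddMomentsVanishUpTo L (2 * n)) {Q : MPoly d} (hQ : Q.totalDegree ≤ n)
    (horth : ∀ R : MPoly d, IsDegLt R n → L (Q * R) = 0) : HasParity Q n := by
  set Qg := parityComponent (n : ZMod 2) Q
  set Qb := parityComponent ((n : ZMod 2) + 1) Q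
  have hQgb : Qg + Qb = Q := parityComponent_add_parityComponent_add_one _ Q
  have hQg : Qg.totalDegree ≤ n := (totalDegree_parityComponent_le _ Q).trans hQ
  have hQb : Qb.totalDegree ≤ n := (totalDegree_parityComponent_le _ Q).trans hQ
  have hgb : L (Qg * Qb) = 0 := by
    refine hodd.map_eq_zero ?_ ((totalDegree_mul _ _).trans (by omega))
    have h := (hasParity_parityComponent (n : ZMod 2) Q).mul (hasParity_parityComponent (n + 1) Q)
    rwa [← add_assoc, CharTwo.add_self_eq_zero, zero_add] at h
  have hbb : L (Qb * Qb) = 0 := by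
    have hQQb : L (Q * Qb) = 0 :=
      horth Qb ((eq_or_ne Qb 0).imp id ((hasParity_parityComponent _ Q).totalDegree_lt hQb))
    rwa [← hQgb, add_mul, map_add, hgb, zero_add] at hQQb
  have hQb0 : Qb = 0 := by
    by_contra h
    exact (hL Qb h).ne' hbb
  rw [← hQgb, hQb0, add_zero]
  exact hasParity_parityComponent _ Q

def paritySpan (P : ∀ n, Idx d n → MPoly d) (r : ZMod 2) : Submodule ℝ (MPoly d) :=
  Submodule.span ℝ {p | ∃ m, ∃ α : Idx d m, (m : ZMod 2) = r ∧ p = P m α}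

theorem SpansPi.mem_paritySpan (hspan : SpansPi P) {n : ℕ}
    (hP : ∀ m ≤ n, ∀ α : Idx d m, HasParity (P m α) m) {r : ZMod 2} {f : MPoly d}
    (hf : HasParity f r) (hfn : f.totalDegree ≤ n) : f ∈ paritySpan P r := by
  have hf_span : f ∈ Submodule.span ℝ {p | ∃ m, m ≤ n ∧ ∃ α : Idx d m, p = P m α} :=
    hspan n ▸ (mem_restrictTotalDegree _ _ _).2 hfn
  have hcomp : Submodule.span ℝ {p | ∃ m, m ≤ n ∧ ∃ α : Idx d m, p = P m α} ≤
      (paritySpan P r).comap (parityComponent r) := by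
    refine Submodule.span_le.2 ?_
    rintro _ ⟨m, hm, α, rfl⟩
    by_cases hmr : (m : ZMod 2) = r
    · rw [SetLike.mem_coe, Submodule.mem_comap,
        (hmr ▸ hP m hm α : HasParity (P m α) r).weightedHomogeneousComponent_same]
      exact Submodule.subset_span ⟨m, α, hmr, rfl⟩
    · rw [SetLike.mem_coe, Submodule.mem_comap,
        (hP m hm α).weightedHomogeneousComponent_ne r (Ne.symm hmr)]
      exact zero_mem _
  rw [← hf.weightedHomogeneousComponent_same]
  exact hcomp hf_span

theorem map_X_mul_mul_eq_zero_of_parity_eq (hspan : SpansPi P)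
    (hoff : DegreewiseOrthogonal L P)
    (hB : ∀ (n : ℕ) (i : Fin d), Bmat L P n i = 0) (i : Fin d) {m m' : ℕ}
    (hmm' : (m : ZMod 2) = m') (α : Idx d m) (β : Idx d m') :
    L (X i * P m α * P m' β) = 0 := by
  rw [ZMod.natCast_eq_natCast_iff'] at hmm'
  have hXP : ∀ k (γ : Idx d k), (X i * P k γ).totalDegree ≤ k + 1 := fun k γ =>
    (totalDegree_mul _ _).trans (by rw [totalDegree_X]; have := hspan.totalDegree_le_s10 k γ; omega)
  rcases lt_trichotomy m m' with h | rfl | h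
  · rw [mul_comm]
    exact hspan.map_mul_eq_zero_of_isDegLt hoff β (Or.inr ((hXP m α).trans_lt (by omega)))
  · exact congrFun (congrFun (hB m i) α) β
  · rw [mul_right_comm, mul_comm]
    exact hspan.map_mul_eq_zero_of_isDegLt hoff α (Or.inr ((hXP m' β).trans_lt (by omega)))

theorem map_X_mul_mul_eq_zero_of_mem_paritySpan (hspan : SpansPi P)
    (hoff : DegreewiseOrthogonal L P)
    (hB : ∀ (n : ℕ) (i : Fin d), Bmat L P n i = 0) (i : Fin d) {r : ZMod 2} {f g : MPoly d}
    (hf : f ∈ paritySpan P r) (hg : g ∈ paritySpan P r) : L (X i * f * g) = 0 := by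
  refine L.map_mul_eq_zero_of_mem_span hg ?_
  rintro _ ⟨m', β, hm', rfl⟩
  rw [mul_right_comm]
  refine L.map_mul_eq_zero_of_mem_span hf ?_
  rintro _ ⟨m, α, hm, rfl⟩
  exact map_X_mul_mul_eq_zero_of_parity_eq hspan hoff hB i (hm'.trans hm.symm) β α

theorem oddMomentsVanishUpTo_of_Bmat_eq_zero (hL : ∀ p : MPoly d, p ≠ 0 → 0 < L (p * p))
    (hspan : SpansPi P)
    (hoff : DegreewiseOrthogonal L P)
    (hB : ∀ (n : ℕ) (i : Fin d), Bmat L P n i = 0) (n : ℕ) :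
    OddMomentsVanishUpTo L (2 * n) := by
  induction n with
  | zero =>
    intro μ hμ hμ0
    rw [Nat.le_zero.1 hμ0] at hμ
    exact absurd hμ Nat.not_odd_zero
  | succ n ih =>
    have hP : ∀ m ≤ n, ∀ α : Idx d m, HasParity (P m α) m := fun m hm α =>
      hasParity_of_forall_isDegLt hL (ih.mono (by omega)) (hspan.totalDegree_le_s10 m α)
        fun _ => hspan.map_mul_eq_zero_of_isDegLt hoff α
    have hmono : ∀ μ : Fin d →₀ ℕ, μ.degree = n → monomial μ (1 : ℝ) ∈ paritySpan P n :=
      fun μ hμ => hspan.mem_paritySpan hP (hμ ▸ hasParity_monomial μ 1)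
        ((totalDegree_monomial μ one_ne_zero).trans_le hμ.le)
    intro γ hγ hγn
    rcases le_or_gt γ.degree (2 * n) with h | h
    · exact ih γ hγ h
    obtain ⟨i, a, b, ha, hb, rfl⟩ :
        ∃ i a b, a.degree = n ∧ b.degree = n ∧ γ = Finsupp.single i 1 + a + b := by
      obtain ⟨k, hk⟩ := hγ
      exact Finsupp.exists_eq_single_add_add (by omega)
    rw [show monomial (Finsupp.single i 1 + a + b) (1 : ℝ) = X i * monomial a 1 * monomial b 1 by
      simp only [X, monomial_mul, mul_one]]
    exact map_X_mul_mul_eq_zero_of_mem_paritySpan hspan hoff hB i (hmono a ha) (hmono b hb)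

theorem Bmat_eq_zero_of_hasParity (hodd : ∀ N, OddMomentsVanishUpTo L N) {n : ℕ}
    (hP : ∀ α : Idx d n, HasParity (P n α) n) (i : Fin d) : Bmat L P n i = 0 := by
  ext α β
  have h := ((hasParity_X i).mul (hP α)).mul (hP β)
  rw [add_assoc, CharTwo.add_self_eq_zero, add_zero] at h
  exact (hodd _).map_eq_zero h le_rfl

end OrthogonalFamily

theorem forall_odd_map_mono_eq_zero_iff {L : MPoly d →ₗ[ℝ] ℝ} :
    (∀ α : Fin d → ℕ, Odd (∑ i, α i) → L (mono α) = 0) ↔ ∀ N, OddMomentsVanishUpTo L N := by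
  refine ⟨fun h N μ hμ _ => ?_, fun h α hα => ?_⟩
  · rw [Finsupp.degree_eq_sum] at hμ
    simpa [mono] using h μ hμ
  · exact h _ _ (by rwa [Finsupp.degree_eq_sum]) le_rfl

theorem centrally_symmetric_iff_B_eq_zero_general
    (L : MPoly d →ₗ[ℝ] ℝ)
    (hL : ∀ p : MPoly d, p ≠ 0 → 0 < L (p * p))
    (P : ∀ n, Idx d n → MPoly d)
    (hspan : SpansPi P)
    (hoff : ∀ n m : ℕ, n ≠ m → ∀ (α : Idx d n) (β : Idx d m), L (P n α * P m β) = 0) :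
    ((∀ α : Fin d → ℕ, Odd (∑ i, α i) → L (mono α) = 0) ↔
      ∀ (n : ℕ) (i : Fin d), Bmat L P n i = 0) ∧
    ((∀ α : Fin d → ℕ, Odd (∑ i, α i) → L (mono α) = 0) →
      ∀ (n : ℕ) (Q : MPoly d), Q.totalDegree = n →
        (∀ R : MPoly d, IsDegLt R n → L (Q * R) = 0) →
        ∀ m ∈ Q.support, (∑ i, m i) % 2 = n % 2) := by
  have hparity : (∀ N, OddMomentsVanishUpTo L N) → ∀ (n : ℕ) (Q : MPoly d),
      Q.totalDegree ≤ n → (∀ R : MPoly d, IsDegLt R n → L (Q * R) = 0) → HasParity Q n :=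
    fun hodd _ _ hQ horth => hasParity_of_forall_isDegLt hL (hodd _) hQ horth
  rw [forall_odd_map_mono_eq_zero_iff]
  refine ⟨⟨fun hodd n i => ?_, fun hB N => ?_⟩, fun hodd n Q hQ horth m hm => ?_⟩
  · exact Bmat_eq_zero_of_hasParity hodd (fun α => hparity hodd n _ (hspan.totalDegree_le_s10 n α)
      fun _ => hspan.map_mul_eq_zero_of_isDegLt hoff α) i
  · exact (oddMomentsVanishUpTo_of_Bmat_eq_zero hL hspan hoff hB N).mono (by omega)
  · rw [← ZMod.natCast_eq_natCast_iff', ← Finsupp.degree_eq_sum]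
    exact (hparity hodd n Q hQ.le horth).degree_eq hm

/-- `L` is centrally symmetric iff all matrices `B_{n,i}` of the three-term relation of an
orthonormal family vanish; and if `L` is centrally symmetric then every orthogonal polynomial
of degree `n` only involves monomials of total degree congruent to `n` mod 2. -/
theorem centrally_symmetric_iff_B_eq_zero
    (L : MPoly d →ₗ[ℝ] ℝ)
    (hL : ∀ p : MPoly d, p ≠ 0 → 0 < L (p * p))
    (P : ∀ n, Idx d n → MPoly d)
    (hdeg : ∀ n (α : Idx d n), (P n α).totalDegree = n)
    (hspan : SpansPi P)
    (hon : ∀ n (α β : Idx d n), L (P n α * P n β) = if α = β then 1 else 0)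
    (hoff : ∀ n m : ℕ, n ≠ m → ∀ (α : Idx d n) (β : Idx d m), L (P n α * P m β) = 0) :
    ((∀ α : Fin d → ℕ, Odd (∑ i, α i) → L (mono α) = 0) ↔
      ∀ (n : ℕ) (i : Fin d), Bmat L P n i = 0) ∧
    ((∀ α : Fin d → ℕ, Odd (∑ i, α i) → L (mono α) = 0) →
      ∀ (n : ℕ) (Q : MPoly d), Q.totalDegree = n →
        (∀ R : MPoly d, IsDegLt R n → L (Q * R) = 0) →
        ∀ m ∈ Q.support, (∑ i, m i) % 2 = n % 2) :=
  centrally_symmetric_iff_B_eq_zero_general L hL P hspan hoff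
end
end

section
/- Let L be a positive definite moment functional on real polynomials in d variables, {ℙ_k} an orthonormal family with three-term coefficient matrices A_{k,i} = L(x_i ℙ_k ℙ_{k+1}ᵀ) and B_{k,i} = L(x_i ℙ_k ℙ_kᵀ). For n ≥ 1 and 1 ≤ i ≤ d let J_{n,i} be the symmetric truncated block Jacobi matrix of order N = dim Π_{n−1}^d, block tridiagonal with diagonal blocks B_{0,i}, B_{1,i}, …, B_{n−1,i} and super/sub-diagonal blocks A_{k,i} and A_{k,i}ᵀ (0 ≤ k ≤ n−2). Then a point λ ∈ ℝ^d is a common zero of ℙ_n (i.e. P_α^n(λ) = 0 for all |α| = n) if and only if λ is a joint eigenvalue of J_{n,1}, …, J_{n,d}, i.e. there exists ξ ∈ ℝ^N, ξ ≠ 0, with J_{n,i} ξ = λ_i ξ for all 1 ≤ i ≤ d; moreover, in that case the vector ξ = (ℙ_0ᵀ(λ), ℙ_1ᵀ(λ), …, ℙ_{n−1}ᵀ(λ))ᵀ is such a joint eigenvector. -/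
open MvPolynomial Matrix MeasureTheory

noncomputable section

variable {d : ℕ}

/-- Index set for the truncated block Jacobi matrix `J_{n,i}`: all multi-indices of total
degree `< n`; its cardinality is `N = dim Π_{n-1}^d`. -/
abbrev JacIdx (d n : ℕ) : Type := Σ k : Fin n, Idx d (k : ℕ)

/-- The action `ξ ↦ J_{n,i} ξ` of the truncated block Jacobi matrix: block tridiagonal with
diagonal blocks `B_{k,i}`, superdiagonal blocks `A_{k,i}` and subdiagonal blocks `A_{k-1,i}ᵀ`. -/
noncomputable def jacMulVec (n : ℕ)
    (A : ∀ k : ℕ, Fin d → Matrix (Idx d k) (Idx d (k+1)) ℝ)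
    (B : ∀ k : ℕ, Fin d → Matrix (Idx d k) (Idx d k) ℝ)
    (i : Fin d) (ξ : JacIdx d n → ℝ) : JacIdx d n → ℝ :=
  fun p =>
    (∑ β : Idx d (p.1 : ℕ), B (p.1 : ℕ) i p.2 β * ξ ⟨p.1, β⟩) +
    (if h : ((p.1 : ℕ) + 1) < n then
      ∑ β : Idx d ((p.1 : ℕ) + 1), A (p.1 : ℕ) i p.2 β * ξ ⟨⟨(p.1 : ℕ) + 1, h⟩, β⟩
    else 0) +
    (if h : 0 < (p.1 : ℕ) then
      ∑ β : Idx d ((p.1 : ℕ) - 1),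
        A ((p.1 : ℕ) - 1) i β ⟨p.2.1, by have := p.2.2; omega⟩ *
          ξ ⟨⟨(p.1 : ℕ) - 1, by have := p.1.isLt; omega⟩, β⟩
    else 0)


/-!
Identify `ξ ∈ ℝ^N` with the polynomial `q_ξ = ∑_p ξ_p P_p` of degree `< n`. By
orthogonality, only the blocks `k - 1, k, k + 1` of `L(P_α^k x_i q_ξ)` survive, and they are
exactly the three blocks of `J_{n,i}`: thus `(J_{n,i} ξ)_p = L(P_p x_i q_ξ)`.

If `ℙ_n(λ) = 0`, expand `x_i P_p` (degree `≤ n`) in the orthonormal basis and evaluate at `λ`: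
the degree-`n` terms vanish, and what remains says `J_{n,i} ξ = λ_i ξ` for
`ξ = (ℙ_0(λ), …, ℙ_{n-1}(λ))`, which is nonzero because `P_0` is a nonzero constant.

Conversely, if `J_{n,i} ξ = λ_i ξ` for all `i`, then `L(x_i r q_ξ) = λ_i L(r q_ξ)` whenever
`deg r < n`, and peeling off one variable at a time gives `L(s q_ξ) = s(λ) L(q_ξ)` for
`deg s ≤ n`. Taking `s = q_ξ` and using positivity shows `L(q_ξ) ≠ 0`; taking `s = P_α^n`,
which is orthogonal to `q_ξ`, gives `P_α^n(λ) = 0`.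
-/

open Finset

theorem sum_range_eq_of_eq_zero_of_far {M : Type*} [AddCommMonoid M] {n k : ℕ} (hk : k < n)
    {g : ℕ → M} (hlow : ∀ j, j + 1 < k → g j = 0) (hhigh : ∀ j, k + 1 < j → g j = 0) :
    ∑ j ∈ range n, g j =
      g k + (if k + 1 < n then g (k + 1) else 0) + (if 0 < k then g (k - 1) else 0) := by
  have hbelow : ∑ j ∈ range k, g j = if 0 < k then g (k - 1) else 0 := by
    rcases k with _ | k
    · simp
    · rw [sum_range_succ, sum_eq_zero fun j hj => hlow j (by simp at hj; omega)]
      simp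
  have hcut : ∑ j ∈ range n, g j = ∑ j ∈ range (min n (k + 2)), g j := by
    refine (sum_subset (range_subset_range.mpr (min_le_left _ _)) fun j hj hj' => ?_).symm
    simp only [mem_range, lt_min_iff, not_and_or, not_lt] at hj hj'
    exact hhigh j (by omega)
  rw [hcut]
  by_cases h : k + 1 < n
  · rw [min_eq_right (by omega), sum_range_succ, sum_range_succ, hbelow, if_pos h]
    abel
  · rw [min_eq_left (by omega), (by omega : n = k + 1), sum_range_succ, hbelow,
      if_neg (lt_irrefl _)]
    abel

theorem MvPolynomial.map_eq_eval_smul_map_one {σ R M : Type*} [CommRing R] [IsDomain R]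
    [AddCommGroup M] [Module R M] (φ : MvPolynomial σ R →ₗ[R] M) (x : σ → R) {N : ℕ}
    (hX : ∀ i r, r.totalDegree < N → φ (r * X i) = x i • φ r) {s : MvPolynomial σ R}
    (hs : s.totalDegree ≤ N) : φ s = eval x s • φ 1 := by
  have hmonomial : ∀ u a, (monomial u a).totalDegree ≤ N →
      φ (monomial u a) = eval x (monomial u a) • φ 1 := by
    refine induction_on_monomial (fun a _ => ?_) (fun p i ih hp => ?_)
    · rw [eval_C, ← mul_one (C a), ← smul_eq_C_mul, map_smul]
    by_cases hp0 : p = 0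
    · simp [hp0]
    rw [totalDegree_mul_of_isDomain hp0 (X_ne_zero i), totalDegree_X] at hp
    rw [hX i p (by omega), ih (by omega), eval_mul, eval_X, mul_comm, mul_smul]
  rw [s.as_sum, map_sum, map_sum, sum_smul]
  exact sum_congr rfl fun u hu =>
    hmonomial u _ ((totalDegree_monomial_le _ _).trans ((le_totalDegree hu).trans hs))

structure IsOrthonormalFamily (L : MPoly d →ₗ[ℝ] ℝ) (P : ∀ n, Idx d n → MPoly d) :
    Prop where
  totalDegree_eq : ∀ n (α : Idx d n), (P n α).totalDegree = n
  spans : SpansPi P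
  orthonormal : ∀ n (α β : Idx d n), L (P n α * P n β) = if α = β then 1 else 0
  orthogonal : ∀ n m : ℕ, n ≠ m → ∀ (α : Idx d n) (β : Idx d m), L (P n α * P m β) = 0

/-- The vector `(ℙ_0ᵀ, …, ℙ_{n-1}ᵀ)ᵀ`. -/
def familyBelow (P : ∀ n, Idx d n → MPoly d) (n : ℕ) (p : JacIdx d n) : MPoly d := P p.1 p.2

theorem sum_familyBelow_succ {M : Type*} [AddCommMonoid M] (P : ∀ n, Idx d n → MPoly d)
    (n : ℕ) (f : MPoly d → M) :
    ∑ p, f (familyBelow P (n + 1) p) = ∑ p, f (familyBelow P n p) + ∑ α, f (P n α) := by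
  simp only [familyBelow, Fintype.sum_sigma, Fin.sum_univ_castSucc, Fin.val_castSucc,
    Fin.val_last]

theorem mem_span_familyBelow {P : ∀ n, Idx d n → MPoly d} (hspan : SpansPi P) {n : ℕ}
    {r : MPoly d} (hr : r.totalDegree < n) :
    r ∈ Submodule.span ℝ (Set.range (familyBelow P n)) := by
  obtain ⟨m, rfl⟩ : ∃ m, n = m + 1 := ⟨n - 1, by omega⟩
  have hrange : Set.range (familyBelow P (m + 1)) =
      {p | ∃ k, k ≤ m ∧ ∃ α : Idx d k, p = P k α} := by
    ext
    constructor
    · rintro ⟨⟨k, α⟩, rfl⟩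
      exact ⟨k, Nat.lt_succ_iff.mp k.isLt, α, rfl⟩
    · rintro ⟨k, hk, α, rfl⟩
      exact ⟨⟨⟨k, Nat.lt_succ_of_le hk⟩, α⟩, rfl⟩
  rw [hrange, hspan m, mem_restrictTotalDegree]
  omega

/-- The subdiagonal block of `jacMulVec` reads `γ : Idx d k` as an element of
`Idx d (k - 1 + 1)`. -/
theorem apply_pred_eq_L {L : MPoly d →ₗ[ℝ] ℝ} {P : ∀ n, Idx d n → MPoly d}
    {A : ∀ k : ℕ, Fin d → Matrix (Idx d k) (Idx d (k+1)) ℝ}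
    (hA : ∀ (k : ℕ) (i : Fin d) (α : Idx d k) (β : Idx d (k+1)),
      A k i α β = L (X i * P k α * P (k+1) β))
    {k : ℕ} (hk : 0 < k) (i : Fin d) (γ : Idx d k) (β : Idx d (k - 1))
    (h : ∑ x, γ.1 x = k - 1 + 1) :
    A (k - 1) i β ⟨γ.1, h⟩ = L (P k γ * X i * P (k - 1) β) := by
  obtain ⟨k, rfl⟩ : ∃ m, k = m + 1 := ⟨k - 1, by omega⟩
  change A k i β γ = L (P (k + 1) γ * X i * P k β)
  rw [hA, mul_right_comm, mul_comm (X i)]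

namespace IsOrthonormalFamily

variable {L : MPoly d →ₗ[ℝ] ℝ} {P : ∀ n, Idx d n → MPoly d}
  {A : ∀ k : ℕ, Fin d → Matrix (Idx d k) (Idx d (k+1)) ℝ}
  {B : ∀ k : ℕ, Fin d → Matrix (Idx d k) (Idx d k) ℝ}

theorem L_familyBelow_mul (hP : IsOrthonormalFamily L P) {n : ℕ} (p p' : JacIdx d n) :
    L (familyBelow P n p * familyBelow P n p') = if p = p' then 1 else 0 := by
  obtain ⟨⟨k, hk⟩, α⟩ := p
  obtain ⟨⟨k', hk'⟩, β⟩ := p'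
  by_cases h : k = k'
  · subst h
    simp [familyBelow, hP.orthonormal]
  · rw [if_neg (by simp [h])]
    exact hP.orthogonal k k' h α β

theorem L_familyBelow_mul_linearCombination (hP : IsOrthonormalFamily L P) {n : ℕ}
    (c : JacIdx d n → ℝ) (p : JacIdx d n) :
    L (familyBelow P n p * Fintype.linearCombination ℝ (familyBelow P n) c) = c p := by
  simp [Fintype.linearCombination_apply, mul_sum, hP.L_familyBelow_mul]

theorem linearCombination_L_familyBelow_mul (hP : IsOrthonormalFamily L P) {n : ℕ}
    {r : MPoly d} (hr : r.totalDegree < n) :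
    Fintype.linearCombination ℝ (familyBelow P n) (fun p => L (familyBelow P n p * r)) = r := by
  obtain ⟨c, rfl⟩ :
      r ∈ LinearMap.range (Fintype.linearCombination ℝ (familyBelow P n)) := by
    rw [Fintype.range_linearCombination]
    exact mem_span_familyBelow hP.spans hr
  simp_rw [hP.L_familyBelow_mul_linearCombination]

theorem L_mul_eq_zero_of_totalDegree_lt (hP : IsOrthonormalFamily L P) {k : ℕ} {r : MPoly d}
    (hr : r.totalDegree < k) (α : Idx d k) : L (r * P k α) = 0 := by
  refine LinearMap.eqOn_span' (f := L ∘ₗ LinearMap.mulRight ℝ (P k α)) (g := 0) ?_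
    (mem_span_familyBelow hP.spans hr)
  rintro _ ⟨⟨j, β⟩, rfl⟩
  exact hP.orthogonal j k (by omega) β α

theorem L_mul_X_mul_eq_zero (hP : IsOrthonormalFamily L P) {k m : ℕ} (h : k + 1 < m ∨ m + 1 < k)
    (α : Idx d k) (i : Fin d) (β : Idx d m) : L (P k α * X i * P m β) = 0 := by
  have hX : ∀ {j} (γ : Idx d j), (P j γ * X i).totalDegree ≤ j + 1 := fun γ =>
    (totalDegree_mul _ _).trans (by rw [totalDegree_X, hP.totalDegree_eq])
  rcases h with h | h
  · exact hP.L_mul_eq_zero_of_totalDegree_lt ((hX α).trans_lt h) β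
  · rw [mul_right_comm, mul_comm (P k α), mul_right_comm]
    exact hP.L_mul_eq_zero_of_totalDegree_lt ((hX β).trans_lt h) α

theorem jacMulVec_apply (hP : IsOrthonormalFamily L P)
    (hA : ∀ (k : ℕ) (i : Fin d) (α : Idx d k) (β : Idx d (k+1)),
      A k i α β = L (X i * P k α * P (k+1) β))
    (hB : ∀ (k : ℕ) (i : Fin d) (α β : Idx d k), B k i α β = L (X i * P k α * P k β))
    {n : ℕ} (i : Fin d) (ξ : JacIdx d n → ℝ) (p : JacIdx d n) :
    jacMulVec n A B i ξ p =
      L (familyBelow P n p * X i * Fintype.linearCombination ℝ (familyBelow P n) ξ) := by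
  obtain ⟨⟨j, hj⟩, γ⟩ := p
  set g : ℕ → ℝ := fun m => if h : m < n then
    ∑ β : Idx d m, L (P j γ * X i * P m β) * ξ ⟨⟨m, h⟩, β⟩ else 0
  have hexpand :
      L (familyBelow P n ⟨⟨j, hj⟩, γ⟩ * X i *
          Fintype.linearCombination ℝ (familyBelow P n) ξ) = ∑ m ∈ range n, g m := by
    rw [Fintype.linearCombination_apply, mul_sum, map_sum, Fintype.sum_sigma,
      ← Fin.sum_univ_eq_sum_range g n]
    refine sum_congr rfl fun m _ => ?_
    simp only [g, dif_pos m.isLt, Fin.eta, familyBelow, mul_smul_comm, map_smul, smul_eq_mul,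
      mul_comm (ξ _)]
  have hfar : ∀ m, j + 1 < m ∨ m + 1 < j → g m = 0 := by
    intro m hm
    simp only [g]
    split_ifs
    · simp [hP.L_mul_X_mul_eq_zero hm]
    · rfl
  rw [hexpand, sum_range_eq_of_eq_zero_of_far hj (fun m hm => hfar m (Or.inr hm))
    (fun m hm => hfar m (Or.inl hm))]
  simp only [jacMulVec]
  congr 1
  congr 1
  · simp only [g, dif_pos hj, hB, mul_comm (X i)]
  · split_ifs with h
    · simp only [g, dif_pos h, hA, mul_comm (X i)]
    · rfl
  · split_ifs with h
    · simp only [g, dif_pos (by omega : j - 1 < n), apply_pred_eq_L hA h]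
    · rfl

theorem jacMulVec_eval_familyBelow (hP : IsOrthonormalFamily L P)
    (hA : ∀ (k : ℕ) (i : Fin d) (α : Idx d k) (β : Idx d (k+1)),
      A k i α β = L (X i * P k α * P (k+1) β))
    (hB : ∀ (k : ℕ) (i : Fin d) (α β : Idx d k), B k i α β = L (X i * P k α * P k β))
    {n : ℕ} {x : Fin d → ℝ} (hzero : ∀ α : Idx d n, eval x (P n α) = 0) (i : Fin d) :
    jacMulVec n A B i (fun p => eval x (familyBelow P n p)) =
      fun p => x i * eval x (familyBelow P n p) := by
  funext p
  set r := familyBelow P n p * X i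
  have hr : r.totalDegree < n + 1 := (totalDegree_mul _ _).trans_lt <| by
    rw [totalDegree_X, familyBelow, hP.totalDegree_eq]
    omega
  calc jacMulVec n A B i (fun p => eval x (familyBelow P n p)) p
      = ∑ p' : JacIdx d n, L (familyBelow P n p' * r) * eval x (familyBelow P n p') := by
        simp only [jacMulVec_apply hP hA hB, Fintype.linearCombination_apply, mul_sum, map_sum,
          mul_smul_comm, map_smul, smul_eq_mul]
        exact sum_congr rfl fun p' _ => by rw [mul_comm, mul_comm (familyBelow P n p')]
    _ = eval x r := by
        conv_rhs => rw [← hP.linearCombination_L_familyBelow_mul hr]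
        simp only [Fintype.linearCombination_apply, map_sum, smul_eval]
        rw [sum_familyBelow_succ P n fun q => L (q * r) * eval x q]
        simp [hzero]
    _ = x i * eval x (familyBelow P n p) := by rw [eval_mul, eval_X, mul_comm]

theorem eval_zero_ne_zero (hP : IsOrthonormalFamily L P) (x : Fin d → ℝ) (α : Idx d 0) :
    eval x (P 0 α) ≠ 0 := by
  intro h
  have hC := totalDegree_eq_zero_iff_eq_C.mp (hP.totalDegree_eq 0 α)
  have hzero : P 0 α = 0 := by
    rw [hC, ← eval_C (f := x) (coeff 0 (P 0 α)), ← hC, h, C_0]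
  simpa [hzero] using hP.orthonormal 0 α α

theorem eval_familyBelow_ne_zero (hP : IsOrthonormalFamily L P) {n : ℕ} (hn : 0 < n)
    (x : Fin d → ℝ) : (fun p => eval x (familyBelow P n p)) ≠ 0 := fun h =>
  hP.eval_zero_ne_zero x _ (congrFun h ⟨⟨0, hn⟩, ⟨fun _ => 0, by simp⟩⟩)

theorem totalDegree_linearCombination_familyBelow_lt (hP : IsOrthonormalFamily L P) {n : ℕ}
    (hn : 0 < n) (c : JacIdx d n → ℝ) :
    (Fintype.linearCombination ℝ (familyBelow P n) c).totalDegree < n := by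
  rw [Fintype.linearCombination_apply]
  refine (totalDegree_finsetSum _ _).trans_lt ((Finset.sup_lt_iff hn).2 fun p _ => ?_)
  exact (totalDegree_smul_le _ _).trans_lt (by rw [familyBelow, hP.totalDegree_eq]; exact p.1.isLt)

theorem eval_eq_zero_of_jacMulVec_eq_smul (hP : IsOrthonormalFamily L P)
    (hL : ∀ p : MPoly d, p ≠ 0 → 0 < L (p * p))
    (hA : ∀ (k : ℕ) (i : Fin d) (α : Idx d k) (β : Idx d (k+1)),
      A k i α β = L (X i * P k α * P (k+1) β))
    (hB : ∀ (k : ℕ) (i : Fin d) (α β : Idx d k), B k i α β = L (X i * P k α * P k β))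
    {n : ℕ} (hn : 0 < n) {x : Fin d → ℝ} {ξ : JacIdx d n → ℝ} (hξ : ξ ≠ 0)
    (heig : ∀ i, jacMulVec n A B i ξ = fun p => x i * ξ p) (α : Idx d n) :
    eval x (P n α) = 0 := by
  set q := Fintype.linearCombination ℝ (familyBelow P n) ξ
  have hcoord : ∀ p, L (familyBelow P n p * q) = ξ p := hP.L_familyBelow_mul_linearCombination ξ
  have hq : q ≠ 0 := fun h => hξ <| funext fun p => by
    rw [← hcoord, h, mul_zero, map_zero]; rfl
  have hdeg : q.totalDegree < n := hP.totalDegree_linearCombination_familyBelow_lt hn ξ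
  have hmulX : ∀ i r, r.totalDegree < n → L (r * X i * q) = x i • L (r * q) := fun i r hr =>
    LinearMap.eqOn_span'
      (f := L ∘ₗ LinearMap.mulRight ℝ q ∘ₗ LinearMap.mulRight ℝ (X i))
      (g := x i • (L ∘ₗ LinearMap.mulRight ℝ q))
      (by
        rintro _ ⟨p, rfl⟩
        simpa [hcoord] using (jacMulVec_apply hP hA hB i ξ p).symm.trans (congrFun (heig i) p))
      (mem_span_familyBelow hP.spans hr)
  have hagree : ∀ s, s.totalDegree ≤ n → L (s * q) = eval x s * L q := fun s hs => by
    simpa using map_eq_eval_smul_map_one (L ∘ₗ LinearMap.mulRight ℝ q) x hmulX hs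
  have hLq : L q ≠ 0 := fun h => (hL q hq).ne' (by rw [hagree q hdeg.le, h, mul_zero])
  have horth : L (P n α * q) = 0 := by
    rw [mul_comm]
    exact hP.L_mul_eq_zero_of_totalDegree_lt hdeg α
  exact (mul_eq_zero.mp ((hagree _ (hP.totalDegree_eq n α).le).symm.trans horth)).resolve_right hLq

end IsOrthonormalFamily

/-- A point `λ ∈ ℝ^d` is a common zero of `ℙ_n` iff it is a joint eigenvalue of the truncated
block Jacobi matrices `J_{n,1}, …, J_{n,d}`; moreover, in that case
`ξ = (ℙ_0ᵀ(λ), …, ℙ_{n-1}ᵀ(λ))ᵀ` is a joint eigenvector. -/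
theorem common_zero_iff_joint_eigenvalue
    (L : MPoly d →ₗ[ℝ] ℝ)
    (hL : ∀ p : MPoly d, p ≠ 0 → 0 < L (p * p))
    (P : ∀ n, Idx d n → MPoly d)
    (hdeg : ∀ n (α : Idx d n), (P n α).totalDegree = n)
    (hspan : SpansPi P)
    (hon : ∀ n (α β : Idx d n), L (P n α * P n β) = if α = β then 1 else 0)
    (hoff : ∀ n m : ℕ, n ≠ m → ∀ (α : Idx d n) (β : Idx d m), L (P n α * P m β) = 0)
    (A : ∀ k : ℕ, Fin d → Matrix (Idx d k) (Idx d (k+1)) ℝ)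
    (B : ∀ k : ℕ, Fin d → Matrix (Idx d k) (Idx d k) ℝ)
    (hA : ∀ (k : ℕ) (i : Fin d) (α : Idx d k) (β : Idx d (k+1)),
      A k i α β = L (X i * P k α * P (k+1) β))
    (hB : ∀ (k : ℕ) (i : Fin d) (α β : Idx d k),
      B k i α β = L (X i * P k α * P k β))
    (n : ℕ) (hn : 1 ≤ n) (lam : Fin d → ℝ) :
    ((∀ α : Idx d n, eval lam (P n α) = 0) ↔
      ∃ ξ : JacIdx d n → ℝ, ξ ≠ 0 ∧
        ∀ i : Fin d, jacMulVec n A B i ξ = fun p => lam i * ξ p) ∧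
    ((∀ α : Idx d n, eval lam (P n α) = 0) →
      (fun p : JacIdx d n => eval lam (P (p.1 : ℕ) p.2)) ≠ 0 ∧
      ∀ i : Fin d, jacMulVec n A B i (fun p => eval lam (P (p.1 : ℕ) p.2)) =
        fun p => lam i * eval lam (P (p.1 : ℕ) p.2)) := by
  have hP : IsOrthonormalFamily L P := ⟨hdeg, hspan, hon, hoff⟩
  have heigvec := fun hzero : ∀ α : Idx d n, eval lam (P n α) = 0 =>
    And.intro (hP.eval_familyBelow_ne_zero hn lam) (hP.jacMulVec_eval_familyBelow hA hB hzero)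
  exact ⟨⟨fun hzero => ⟨_, heigvec hzero⟩, fun ⟨_, hξ, heig⟩ =>
    hP.eval_eq_zero_of_jacMulVec_eq_smul hL hA hB hn hξ heig⟩, heigvec⟩
end
end

section
/- Let μ ∈ M(ℝ^d) be such that ∫ p² dμ > 0 for every nonzero polynomial p, and let {ℙ_n} be an orthonormal family of polynomials with respect to μ. Then for each n ≥ 1 the following are equivalent: (i) there exists a Gaussian cubature formula of degree 2n−1 for μ, i.e. points x_1, …, x_N ∈ ℝ^d with N = dim Π_{n−1}^d = binom(n−1+d, d) and real weights λ_1, …, λ_N such that ∫ f dμ = Σ_{k=1}^N λ_k f(x_k) for every polynomial f of total degree at most 2n−1; (ii) the vector ℙ_n has exactly dim Π_{n−1}^d common zeros, i.e. the set {x ∈ ℝ^d : P_α^n(x) = 0 for all |α| = n} has cardinality binom(n−1+d, d). -/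
open MvPolynomial Matrix MeasureTheory

noncomputable section

variable {d : ℕ}

/-- `μ` has all moments finite, i.e. `μ ∈ M(ℝ^d)`. -/
def HasAllMoments (μ : Measure (Fin d → ℝ)) : Prop :=
  ∀ α : Fin d → ℕ, Integrable (fun x => ∏ i, x i ^ α i) μ

/-!
Let `K_m(·, v) = ∑_{|α| ≤ m} P_α(v) P_α` be the reproducing kernel of `Π_m^d`. At a common zero
`v` of `ℙ_{m+1}` it reproduces all of `Π_{m+1}^d`: `L(q K_m(·, v)) = q(v)` whenever
`deg q ≤ m + 1`. Taking `q = (x_i - v_i) K_m(·, u)` shows `K_m(u, v) = 0` for distinct common zeros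
`u, v`, so the `K_m(·, v) / K_m(v, v)` are Lagrange polynomials of degree `m` for the common zeros;
hence there are at most `dim Π_m^d = binom (m + d) d` of them.

If there are exactly that many, these Lagrange polynomials span `Π_m^d`, and for `deg p ≤ m`,
`deg q ≤ m + 1` the reproducing property gives `L(p q) = ∑_k p(x_k) q(x_k) / K_m(x_k, x_k)`;
such products span `Π_{2m+1}^d`. Conversely, a rule with `binom (m + d) d` nodes that is exact in
degree `2m + 1` determines polynomials of degree `≤ m` by their values at the nodes (since
`L(p²) > 0`), so by counting dimensions the nodes carry Lagrange polynomials `ℓ_k ∈ Π_m^d`. Then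
`w_k = L(ℓ_k²) > 0` and `0 = L(ℓ_k P_{m+1,α}) = w_k P_{m+1,α}(x_k)`: every node is a common zero.
-/

def idxLeEquiv (d m : ℕ) : IdxLe d m ≃ Idx (d + 1) m where
  toFun a := ⟨Fin.cons (m - ∑ i, a.1 i) a.1, by rw [Fin.sum_cons]; have := a.2; omega⟩
  invFun b := ⟨fun i => b.1 i.succ, by
    have hb := b.2
    rw [Fin.sum_univ_succ] at hb
    dsimp only
    omega⟩
  left_inv a := by
    ext i
    simp only [Fin.cons_succ]
  right_inv b := by
    have hb := b.2
    rw [Fin.sum_univ_succ] at hb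
    ext i
    refine Fin.cases ?_ (fun j => ?_) i
    · simp only [Fin.cons_zero]
      omega
    · simp only [Fin.cons_succ]

theorem card_idxLe (d m : ℕ) : Fintype.card (IdxLe d m) = (m + d).choose d := by
  rw [Fintype.card_congr ((idxLeEquiv d m).trans (Sym.equivNatSumOfFintype (Fin (d + 1)) m).symm),
    Sym.card_sym_eq_multichoose, Fintype.card_fin, Nat.multichoose_eq,
    show d + 1 + m - 1 = m + d by omega, ← Nat.choose_symm (Nat.le_add_right m d)]
  congr 1
  omega

theorem MvPolynomial.finrank_restrictTotalDegree (R : Type*) [CommRing R] [Nontrivial R] (d m : ℕ) :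
    Module.finrank R (restrictTotalDegree (Fin d) R m) = (m + d).choose d := by
  rw [restrictTotalDegree, Module.finrank_eq_nat_card_basis (basisRestrictSupport R _),
    ← card_idxLe, ← Nat.card_eq_fintype_card]
  exact Nat.card_congr (Finsupp.equivFunOnFinite.subtypeEquiv fun s => by
    simp [Finsupp.sum_fintype])

theorem Finsupp.exists_add_eq_of_degree_le_add {σ : Type*} {s : σ →₀ ℕ} {a b : ℕ}
    (h : s.degree ≤ a + b) : ∃ s₁ s₂ : σ →₀ ℕ, s₁ + s₂ = s ∧ s₁.degree ≤ a ∧ s₂.degree ≤ b := by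
  induction a generalizing s with
  | zero => exact ⟨0, s, zero_add s, by simp, by simpa using h⟩
  | succ a ih =>
    by_cases hs : s.degree ≤ a + b
    · obtain ⟨s₁, s₂, hs₁₂, h₁, h₂⟩ := ih hs
      exact ⟨s₁, s₂, hs₁₂, by omega, h₂⟩
    obtain ⟨i, hi⟩ : ∃ i, s i ≠ 0 := by
      by_contra! h0
      exact hs (by simp [show s = 0 from Finsupp.ext h0])
    have hle : Finsupp.single i 1 ≤ s := Finsupp.single_le_iff.2 (Nat.one_le_iff_ne_zero.2 hi)
    have hdeg := congrArg Finsupp.degree (tsub_add_cancel_of_le hle)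
    rw [map_add, Finsupp.degree_single] at hdeg
    obtain ⟨s₁, s₂, hs₁₂, h₁, h₂⟩ := ih (s := s - Finsupp.single i 1) (by omega)
    refine ⟨s₁ + Finsupp.single i 1, s₂, ?_, ?_, h₂⟩
    · rw [add_right_comm, hs₁₂, tsub_add_cancel_of_le hle]
    · rw [map_add, Finsupp.degree_single]
      omega

theorem MvPolynomial.restrictTotalDegree_add_le_mul {σ R : Type*} [CommSemiring R] (a b : ℕ) :
    restrictTotalDegree σ R (a + b) ≤ restrictTotalDegree σ R a * restrictTotalDegree σ R b := by
  intro f hf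
  rw [mem_restrictTotalDegree] at hf
  rw [f.as_sum]
  refine Submodule.sum_mem _ fun s hs => ?_
  obtain ⟨s₁, s₂, rfl, h₁, h₂⟩ :=
    Finsupp.exists_add_eq_of_degree_le_add ((le_totalDegree hs).trans hf)
  rw [← mul_one (coeff _ f), ← monomial_mul]
  exact Submodule.mul_mem_mul
    ((mem_restrictTotalDegree _ _ _).2 ((totalDegree_monomial_le _ _).trans h₁))
    ((mem_restrictTotalDegree _ _ _).2 ((totalDegree_monomial_le _ _).trans h₂))

theorem HasAllMoments.integrable_eval {μ : Measure (Fin d → ℝ)} (hmom : HasAllMoments μ)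
    (p : MPoly d) : Integrable (fun x => eval x p) μ := by
  simp_rw [eval_eq']
  exact integrable_finsetSum _ fun s _ => (hmom fun i => s i).const_mul _

def momentFunctional (μ : Measure (Fin d → ℝ)) (hmom : HasAllMoments μ) : MPoly d →ₗ[ℝ] ℝ where
  toFun p := ∫ x, eval x p ∂μ
  map_add' p q := by
    simp only [map_add]
    exact integral_add (hmom.integrable_eval p) (hmom.integrable_eval q)
  map_smul' c p := by
    simp only [smul_eval, RingHom.id_apply, smul_eq_mul]
    exact integral_const_mul c _

theorem momentFunctional_apply {μ : Measure (Fin d → ℝ)} (hmom : HasAllMoments μ) (p : MPoly d) :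
    momentFunctional μ hmom p = ∫ x, eval x p ∂μ := rfl

theorem linearIndependent_of_eval_eq_ite {σ K ι : Type*} [CommRing K] [DecidableEq ι]
    {x : ι → σ → K} {ℓ : ι → MvPolynomial σ K}
    (h : ∀ j k, eval (x j) (ℓ k) = if j = k then 1 else 0) : LinearIndependent K ℓ := by
  refine linearIndependent_iff'.2 fun s g hg k hk => ?_
  simpa [smul_eval, h, hk] using congrArg (eval (x k)) hg

theorem unisolvent_iff_exists_lagrange {K ι : Type*} [Field K] [Fintype ι] [DecidableEq ι]
    {m : ℕ} {x : ι → Fin d → K} (hcard : Fintype.card ι = (m + d).choose d) :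
    (∀ p : MvPolynomial (Fin d) K, p.totalDegree ≤ m → (∀ k, eval (x k) p = 0) → p = 0) ↔
      ∀ k, ∃ ℓ : MvPolynomial (Fin d) K,
        ℓ.totalDegree ≤ m ∧ ∀ j, eval (x j) ℓ = if j = k then 1 else 0 := by
  let E : restrictTotalDegree (Fin d) K m →ₗ[K] ι → K :=
    { toFun p k := eval (x k) p
      map_add' p q := by ext; simp
      map_smul' c p := by ext; simp [smul_eval] }
  have hdim : Module.finrank K (restrictTotalDegree (Fin d) K m) = Module.finrank K (ι → K) := by
    rw [finrank_restrictTotalDegree, Module.finrank_fintype_fun_eq_card, hcard]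
  have hinj : Function.Injective E ↔
      ∀ p : MvPolynomial (Fin d) K, p.totalDegree ≤ m → (∀ k, eval (x k) p = 0) → p = 0 := by
    rw [injective_iff_map_eq_zero]
    simp [E, funext_iff, Subtype.forall, mem_restrictTotalDegree]
  have hsurj : Function.Surjective E ↔ ∀ k, ∃ ℓ : MvPolynomial (Fin d) K,
      ℓ.totalDegree ≤ m ∧ ∀ j, eval (x j) ℓ = if j = k then 1 else 0 := by
    rw [← LinearMap.range_eq_top, eq_top_iff, ← (Pi.basisFun K ι).span_eq, Submodule.span_le,
      Set.range_subset_iff]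
    simp [E, funext_iff, Pi.single_apply, mem_restrictTotalDegree]
  rw [← hinj, ← hsurj]
  exact LinearMap.injective_iff_surjective_of_finrank_eq_finrank hdim

def IsCubature (μ : Measure (Fin d → ℝ)) {ι : Type*} [Fintype ι] (x : ι → Fin d → ℝ) (w : ι → ℝ)
    (n : ℕ) : Prop :=
  ∀ f : MPoly d, f.totalDegree ≤ n → ∫ y, eval y f ∂μ = ∑ k, w k * eval (x k) f

theorem sum_mul_eval_mul_of_eval_eq_ite {σ R ι : Type*} [CommSemiring R] [Fintype ι]
    [DecidableEq ι] {x : ι → σ → R} (w : ι → R) {ℓ : MvPolynomial σ R} {k : ι}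
    (hℓ : ∀ j, eval (x j) ℓ = if j = k then 1 else 0) (f : MvPolynomial σ R) :
    ∑ j, w j * eval (x j) (ℓ * f) = w k * eval (x k) f := by
  simp [hℓ]

structure IsOrthonormalFamily_s15 (μ : Measure (Fin d → ℝ)) (P : ∀ n, Idx d n → MPoly d) : Prop where
  totalDegree_eq : ∀ n (α : Idx d n), (P n α).totalDegree = n
  spansPi : SpansPi P
  integral_mul_of_eq : ∀ n (α β : Idx d n),
    ∫ x, eval x (P n α) * eval x (P n β) ∂μ = if α = β then 1 else 0
  integral_mul_of_ne : ∀ n m : ℕ, n ≠ m → ∀ (α : Idx d n) (β : Idx d m),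
    ∫ x, eval x (P n α) * eval x (P m β) ∂μ = 0

def indicesLe (d n : ℕ) : Finset (Σ k, Idx d k) :=
  (Finset.range (n + 1)).sigma fun _ => Finset.univ

theorem sum_indicesLe_succ {M : Type*} [AddCommMonoid M] (n : ℕ) (f : (Σ k, Idx d k) → M) :
    ∑ i ∈ indicesLe d (n + 1), f i =
      ∑ i ∈ indicesLe d n, f i + ∑ α : Idx d (n + 1), f ⟨n + 1, α⟩ := by
  simp only [indicesLe, Finset.sum_sigma, Finset.sum_range_succ]

def reproducingKernel (P : ∀ n, Idx d n → MPoly d) (m : ℕ) (v : Fin d → ℝ) : MPoly d :=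
  ∑ i ∈ indicesLe d m, eval v (P i.1 i.2) • P i.1 i.2

def lagrangeAt (P : ∀ n, Idx d n → MPoly d) (m : ℕ) (v : Fin d → ℝ) : MPoly d :=
  (eval v (reproducingKernel P m v))⁻¹ • reproducingKernel P m v

def commonZeros (P : ∀ n, Idx d n → MPoly d) (n : ℕ) : Set (Fin d → ℝ) :=
  {x | ∀ α : Idx d n, eval x (P n α) = 0}

theorem momentFunctional_mul_self_pos {μ : Measure (Fin d → ℝ)} (hmom : HasAllMoments μ)
    (hpos : ∀ p : MPoly d, p ≠ 0 → 0 < ∫ x, (eval x p) ^ 2 ∂μ) {p : MPoly d} (hp : p ≠ 0) :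
    0 < momentFunctional μ hmom (p * p) := by
  simpa [momentFunctional_apply, sq] using hpos p hp

namespace IsOrthonormalFamily_s15

variable {μ : Measure (Fin d → ℝ)} {P : ∀ n, Idx d n → MPoly d} (hP : IsOrthonormalFamily_s15 μ P)
  (hmom : HasAllMoments μ)
include hP

theorem totalDegree_reproducingKernel_le (m : ℕ) (v : Fin d → ℝ) :
    (reproducingKernel P m v).totalDegree ≤ m := by
  refine (mem_restrictTotalDegree _ _ _).1
    (Submodule.sum_mem _ fun i hi => Submodule.smul_mem _ _ ?_)
  rw [mem_restrictTotalDegree, hP.totalDegree_eq]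
  simp only [indicesLe, Finset.mem_sigma, Finset.mem_range] at hi
  omega

theorem totalDegree_lagrangeAt_le (m : ℕ) (v : Fin d → ℝ) : (lagrangeAt P m v).totalDegree ≤ m :=
  (totalDegree_smul_le _ _).trans (hP.totalDegree_reproducingKernel_le m v)

include hmom

theorem momentFunctional_mul (i j : Σ n, Idx d n) :
    momentFunctional μ hmom (P i.1 i.2 * P j.1 j.2) = if i = j then 1 else 0 := by
  obtain ⟨n, α⟩ := i
  obtain ⟨k, β⟩ := j
  rw [momentFunctional_apply]
  simp only [eval_mul]
  by_cases hnk : n = k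
  · subst hnk
    simp [hP.integral_mul_of_eq]
  · rw [hP.integral_mul_of_ne n k hnk, if_neg fun h => hnk (congrArg Sigma.fst h)]

theorem eq_sum_of_totalDegree_le {n : ℕ} {p : MPoly d} (hp : p.totalDegree ≤ n) :
    p = ∑ i ∈ indicesLe d n, momentFunctional μ hmom (p * P i.1 i.2) • P i.1 i.2 := by
  have hspan : p ∈ Submodule.span ℝ ((fun i : Σ k, Idx d k => P i.1 i.2) '' ↑(indicesLe d n)) := by
    convert (mem_restrictTotalDegree _ _ _).2 hp
    rw [← hP.spansPi n]
    congr 1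
    ext q
    simp [indicesLe, eq_comm]
  obtain ⟨c, rfl⟩ := (Submodule.mem_span_image_finset_iff_exists_fun' ℝ).1 hspan
  refine Finset.sum_congr rfl fun j hj => ?_
  simp only [Finset.sum_mul, map_sum, smul_mul_assoc, map_smul, hP.momentFunctional_mul hmom,
    smul_eq_mul, mul_ite, mul_one, mul_zero, Finset.sum_ite_eq', if_pos hj]

theorem momentFunctional_mul_eq_zero_of_totalDegree_lt {n : ℕ} {p : MPoly d}
    (hp : p.totalDegree < n) (α : Idx d n) : momentFunctional μ hmom (p * P n α) = 0 := by
  rw [hP.eq_sum_of_totalDegree_le hmom (Nat.le_sub_one_of_lt hp), Finset.sum_mul, map_sum]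
  refine Finset.sum_eq_zero fun i hi => ?_
  rw [smul_mul_assoc, map_smul, hP.momentFunctional_mul hmom i ⟨n, α⟩, if_neg, smul_zero]
  intro h
  have : i.1 = n := congrArg Sigma.fst h
  simp only [indicesLe, Finset.mem_sigma, Finset.mem_range] at hi
  omega

theorem momentFunctional_mul_reproducingKernel {m : ℕ} {v : Fin d → ℝ}
    (hv : v ∈ commonZeros P (m + 1)) {q : MPoly d} (hq : q.totalDegree ≤ m + 1) :
    momentFunctional μ hmom (q * reproducingKernel P m v) = eval v q := by
  conv_rhs => rw [hP.eq_sum_of_totalDegree_le hmom hq, sum_indicesLe_succ]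
  simp only [reproducingKernel, Finset.mul_sum, mul_smul_comm, map_add, map_sum, map_smul,
    smul_eval, hv _, zero_mul, Finset.sum_const_zero, add_zero, smul_eq_mul, mul_comm]

theorem eval_reproducingKernel_of_ne {m : ℕ} {u v : Fin d → ℝ} (hu : u ∈ commonZeros P (m + 1))
    (hv : v ∈ commonZeros P (m + 1)) (huv : u ≠ v) : eval u (reproducingKernel P m v) = 0 := by
  obtain ⟨i, hi⟩ := Function.ne_iff.1 huv
  have hlin : (X i - C (v i) : MPoly d).totalDegree ≤ 1 :=
    (totalDegree_sub _ _).trans (by simp)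
  have hdeg (w : Fin d → ℝ) : ((X i - C (v i)) * reproducingKernel P m w).totalDegree ≤ m + 1 :=
    (totalDegree_mul _ _).trans (by have := hP.totalDegree_reproducingKernel_le m w; omega)
  -- Reproduce at `u`, swap the two kernels, reproduce at `v`, where `X i - v i` vanishes.
  have h : (u i - v i) * eval u (reproducingKernel P m v) = 0 := calc
    _ = eval u ((X i - C (v i)) * reproducingKernel P m v) := by simp
    _ = momentFunctional μ hmom
          ((X i - C (v i)) * reproducingKernel P m v * reproducingKernel P m u) :=
      (hP.momentFunctional_mul_reproducingKernel hmom hu (hdeg v)).symm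
    _ = momentFunctional μ hmom
          ((X i - C (v i)) * reproducingKernel P m u * reproducingKernel P m v) := by ring_nf
    _ = eval v ((X i - C (v i)) * reproducingKernel P m u) :=
      hP.momentFunctional_mul_reproducingKernel hmom hv (hdeg u)
    _ = 0 := by simp
  exact (mul_eq_zero.1 h).resolve_left (sub_ne_zero.2 hi)

theorem momentFunctional_mul_lagrangeAt {m : ℕ} {v : Fin d → ℝ} (hv : v ∈ commonZeros P (m + 1))
    {q : MPoly d} (hq : q.totalDegree ≤ m + 1) :
    momentFunctional μ hmom (q * lagrangeAt P m v) =
      (eval v (reproducingKernel P m v))⁻¹ * eval v q := by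
  rw [lagrangeAt, mul_smul_comm, map_smul, hP.momentFunctional_mul_reproducingKernel hmom hv hq,
    smul_eq_mul]

variable (hpos : ∀ p : MPoly d, p ≠ 0 → 0 < ∫ x, (eval x p) ^ 2 ∂μ)
include hpos

theorem eval_reproducingKernel_self_pos {m : ℕ} {v : Fin d → ℝ}
    (hv : v ∈ commonZeros P (m + 1)) : 0 < eval v (reproducingKernel P m v) := by
  have hK : reproducingKernel P m v ≠ 0 := by
    intro h0
    have h1 := hP.momentFunctional_mul_reproducingKernel hmom hv (q := 1) (by simp)
    simp [h0] at h1
  rw [← hP.momentFunctional_mul_reproducingKernel hmom hv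
    ((hP.totalDegree_reproducingKernel_le m v).trans m.le_succ)]
  exact momentFunctional_mul_self_pos hmom hpos hK

theorem eval_lagrangeAt {m : ℕ} {u v : Fin d → ℝ} (hu : u ∈ commonZeros P (m + 1))
    (hv : v ∈ commonZeros P (m + 1)) : eval u (lagrangeAt P m v) = if u = v then 1 else 0 := by
  rw [lagrangeAt, smul_eval]
  split_ifs with huv
  · subst huv
    exact inv_mul_cancel₀ (hP.eval_reproducingKernel_self_pos hmom hpos hu).ne'
  · rw [hP.eval_reproducingKernel_of_ne hmom hu hv huv, mul_zero]

theorem linearIndependent_lagrangeAt (m : ℕ) :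
    LinearIndependent ℝ fun v : commonZeros P (m + 1) =>
      (⟨lagrangeAt P m v, (mem_restrictTotalDegree _ _ _).2 (hP.totalDegree_lagrangeAt_le m v)⟩ :
        restrictTotalDegree (Fin d) ℝ m) := by
  classical
  refine LinearIndependent.of_comp (Submodule.subtype _) ?_
  exact linearIndependent_of_eval_eq_ite (x := Subtype.val) fun u v => by
    simp [hP.eval_lagrangeAt hmom hpos u.2 v.2, Subtype.ext_iff]

theorem commonZeros_finite (m : ℕ) : (commonZeros P (m + 1)).Finite :=
  Set.finite_coe_iff.1 (hP.linearIndependent_lagrangeAt hmom hpos m).finite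

theorem ncard_commonZeros_le (m : ℕ) : (commonZeros P (m + 1)).ncard ≤ (m + d).choose d := by
  have := (hP.commonZeros_finite hmom hpos m).fintype
  rw [← Nat.card_coe_set_eq, Nat.card_eq_fintype_card, ← finrank_restrictTotalDegree ℝ d m]
  exact (hP.linearIndependent_lagrangeAt hmom hpos m).fintype_card_le_finrank

/-- The Gaussian weights are the Christoffel numbers `1 / K_m(x_k, x_k)`. -/
theorem isCubature_of_commonZeros {m : ℕ} {ι : Type*} [Fintype ι]
    {x : ι → Fin d → ℝ} (hx : ∀ k, x k ∈ commonZeros P (m + 1)) (hinj : Function.Injective x)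
    (hcard : Fintype.card ι = (m + d).choose d) :
    IsCubature μ x (fun k => (eval (x k) (reproducingKernel P m (x k)))⁻¹) (2 * m + 1) := by
  classical
  set w := fun k => (eval (x k) (reproducingKernel P m (x k)))⁻¹
  have hℓ (j k : ι) : eval (x j) (lagrangeAt P m (x k)) = if j = k then 1 else 0 := by
    simp [hP.eval_lagrangeAt hmom hpos (hx j) (hx k), hinj.eq_iff]
  have hinterp {p : MPoly d} (hp : p.totalDegree ≤ m) :
      p = ∑ k, eval (x k) p • lagrangeAt P m (x k) := by
    refine sub_eq_zero.1 ((unisolvent_iff_exists_lagrange hcard).2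
      (fun k => ⟨_, hP.totalDegree_lagrangeAt_le m (x k), fun j => hℓ j k⟩) _ ?_ fun j => ?_)
    · refine (totalDegree_sub _ _).trans (max_le hp ?_)
      exact (mem_restrictTotalDegree _ _ _).1 (Submodule.sum_mem _ fun k _ => Submodule.smul_mem _ _
        ((mem_restrictTotalDegree _ _ _).2 (hP.totalDegree_lagrangeAt_le m _)))
    · simp [smul_eval, hℓ]
  have hprod (p : MPoly d) (hp : p ∈ restrictTotalDegree (Fin d) ℝ m) (q : MPoly d)
      (hq : q ∈ restrictTotalDegree (Fin d) ℝ (m + 1)) :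
      momentFunctional μ hmom (p * q) = ∑ k, w k * eval (x k) (p * q) := by
    rw [mem_restrictTotalDegree] at hp hq
    conv_lhs => rw [hinterp hp, Finset.sum_mul, map_sum]
    refine Finset.sum_congr rfl fun k _ => ?_
    rw [smul_mul_assoc, map_smul, mul_comm _ q, hP.momentFunctional_mul_lagrangeAt hmom (hx k) hq,
      eval_mul, smul_eq_mul]
    ring
  intro f hf
  have hf' : f ∈ restrictTotalDegree (Fin d) ℝ (m + (m + 1)) :=
    (mem_restrictTotalDegree _ _ _).2 (by omega)
  rw [← momentFunctional_apply hmom]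
  refine Submodule.mul_induction_on (restrictTotalDegree_add_le_mul m (m + 1) hf') hprod
    fun g h hg hh => ?_
  simp only [map_add, hg, hh, mul_add, Finset.sum_add_distrib]

end IsOrthonormalFamily_s15

namespace IsCubature

variable {μ : Measure (Fin d → ℝ)} {ι : Type*} [Fintype ι] {x : ι → Fin d → ℝ} {w : ι → ℝ}
  {n m : ℕ} (hcub : IsCubature μ x w n) (hmom : HasAllMoments μ)
include hcub hmom

theorem unisolvent (hpos : ∀ p : MPoly d, p ≠ 0 → 0 < ∫ x, (eval x p) ^ 2 ∂μ) (hmn : 2 * m ≤ n)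
    {p : MPoly d} (hp : p.totalDegree ≤ m) (hpx : ∀ k, eval (x k) p = 0) : p = 0 := by
  by_contra hp0
  have h := hcub (p * p) ((totalDegree_mul _ _).trans (by omega))
  rw [← momentFunctional_apply hmom] at h
  simp only [eval_mul, hpx, mul_zero, Finset.sum_const_zero] at h
  exact (momentFunctional_mul_self_pos hmom hpos hp0).ne' h

theorem weight_pos [DecidableEq ι] (hpos : ∀ p : MPoly d, p ≠ 0 → 0 < ∫ x, (eval x p) ^ 2 ∂μ)
    (hmn : 2 * m ≤ n) {ℓ : MPoly d} {k : ι} (hℓdeg : ℓ.totalDegree ≤ m)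
    (hℓ : ∀ j, eval (x j) ℓ = if j = k then 1 else 0) : 0 < w k := by
  have hℓ0 : ℓ ≠ 0 := by
    rintro rfl
    simpa using hℓ k
  have h := hcub (ℓ * ℓ) ((totalDegree_mul _ _).trans (by omega))
  rw [sum_mul_eval_mul_of_eval_eq_ite w hℓ, hℓ k, if_pos rfl, mul_one] at h
  rw [← h]
  exact momentFunctional_mul_self_pos hmom hpos hℓ0

theorem mem_commonZeros [DecidableEq ι] {P : ∀ n, Idx d n → MPoly d}
    (hP : IsOrthonormalFamily_s15 μ P) (hmn : 2 * m + 1 ≤ n) {ℓ : MPoly d} {k : ι}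
    (hℓdeg : ℓ.totalDegree ≤ m) (hℓ : ∀ j, eval (x j) ℓ = if j = k then 1 else 0)
    (hw : w k ≠ 0) : x k ∈ commonZeros P (m + 1) := by
  intro α
  have h := hcub (ℓ * P (m + 1) α) ((totalDegree_mul _ _).trans (by rw [hP.totalDegree_eq]; omega))
  rw [sum_mul_eval_mul_of_eval_eq_ite w hℓ, ← momentFunctional_apply hmom,
    hP.momentFunctional_mul_eq_zero_of_totalDegree_lt hmom (by omega)] at h
  exact (mul_eq_zero.1 h.symm).resolve_left hw

end IsCubature

/-- A Gaussian cubature formula of degree `2n-1` (`n = m+1`) with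
`N = dim Π_{n-1}^d = binom (n-1+d) d` nodes exists for `μ` if and only if `ℙ_n` has exactly
`dim Π_{n-1}^d` common zeros. -/
theorem gaussian_cubature_iff_common_zeros
    (μ : Measure (Fin d → ℝ))
    (hmom : HasAllMoments μ)
    (hpos : ∀ p : MPoly d, p ≠ 0 → 0 < ∫ x, (eval x p) ^ 2 ∂μ)
    (P : ∀ n, Idx d n → MPoly d)
    (hdeg : ∀ n (α : Idx d n), (P n α).totalDegree = n)
    (hspan : SpansPi P)
    (hon : ∀ n (α β : Idx d n),
      ∫ x, eval x (P n α) * eval x (P n β) ∂μ = if α = β then 1 else 0)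
    (hoff : ∀ n m : ℕ, n ≠ m → ∀ (α : Idx d n) (β : Idx d m),
      ∫ x, eval x (P n α) * eval x (P m β) ∂μ = 0)
    (m : ℕ) :
    (∃ (x : Fin ((m + d).choose d) → (Fin d → ℝ)) (w : Fin ((m + d).choose d) → ℝ),
      Function.Injective x ∧
      ∀ f : MPoly d, f.totalDegree ≤ 2 * m + 1 →
        ∫ y, eval y f ∂μ = ∑ k, w k * eval (x k) f) ↔
    {x : Fin d → ℝ | ∀ α : Idx d (m+1), eval x (P (m+1) α) = 0}.ncard = (m + d).choose d := by
  classical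
  have hP : IsOrthonormalFamily_s15 μ P := ⟨hdeg, hspan, hon, hoff⟩
  have hfin := hP.commonZeros_finite hmom hpos m
  change (∃ x w, Function.Injective x ∧ IsCubature μ x w (2 * m + 1)) ↔
    (commonZeros P (m + 1)).ncard = _
  constructor
  · rintro ⟨x, w, hinj, hcub⟩
    choose ℓ hℓdeg hℓ using (unisolvent_iff_exists_lagrange (m := m) (by simp)).1
      fun p hp => hcub.unisolvent hmom hpos (by omega) hp
    have hx (k) : x k ∈ commonZeros P (m + 1) :=
      hcub.mem_commonZeros hmom hP le_rfl (hℓdeg k) (hℓ k)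
        (hcub.weight_pos hmom hpos (by omega) (hℓdeg k) (hℓ k)).ne'
    refine (hP.ncard_commonZeros_le hmom hpos m).antisymm ?_
    calc (m + d).choose d = (Set.range x).ncard := by simp [Set.ncard_range_of_injective hinj]
      _ ≤ _ := Set.ncard_le_ncard (Set.range_subset_iff.2 hx) hfin
  · intro hZ
    have := hfin.to_subtype
    let e := Finite.equivFinOfCardEq ((Nat.card_coe_set_eq _).trans hZ)
    exact ⟨fun k => e.symm k, _, Subtype.val_injective.comp e.symm.injective,
      hP.isCubature_of_commonZeros hmom hpos (fun k => (e.symm k).2)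
        (Subtype.val_injective.comp e.symm.injective) (Fintype.card_fin _)⟩
end
end
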